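/- arXiv:1008.4076 — 8 statements merged into one kernel-verified Lean document; each statement's English description precedes it below -/
import Mathlib

section
/- Let k be a commutative ring, A and C unital k-algebras, and s : C ⊗ A → A ⊗ C a k-linear map satisfying s(1⊗a) = a⊗1, s(c⊗1) = 1⊗c, and s∘(μ_C⊗A) = (A⊗μ_C)∘(s⊗C)∘(C⊗s). If (c_i)_{i∈I} generates C as a k-algebra and s(c_i ⊗ aa') = (μ_A⊗C)∘(A⊗s)∘(s⊗A)(c_i⊗a⊗a') for all a,a' ∈ A and all i, then s is a twisting map, i.e. it also satisfies s∘(C⊗μ_A) = (μ_A⊗C)∘(A⊗s)∘(s⊗A) on all of C⊗A⊗A. -/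
/-!
Put `(p ⊗ q) ⋆ (e ⊗ f) = (p ⊗ 1) s(q ⊗ e) (1 ⊗ f)` on `A ⊗ C`, the product of the twisted
tensor product. Then `s (c ⊗ a) = (1 ⊗ c) ⋆ (a ⊗ 1)`, the `C`-condition reads
`s (c c' ⊗ a) = (1 ⊗ c) ⋆ s (c' ⊗ a)`, and the `A`-condition at `c` reads
`s (c ⊗ a a') = s (c ⊗ a) ⋆ (a' ⊗ 1)`. The `c` satisfying the latter form a subalgebra of `C`:
it contains `1` by the unit condition, and it is closed under products because, for such `c`,
left `⋆`-multiplication by `1 ⊗ c` commutes with right `⋆`-multiplication by `a' ⊗ 1`. That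
subalgebra contains the generators, so it is all of `C`.
-/

open TensorProduct

def IsTwistingMap (k A C : Type*) [CommRing k] [Ring A] [Ring C] [Algebra k A]
    [Algebra k C] (s : C ⊗[k] A →ₗ[k] A ⊗[k] C) : Prop :=
  (∀ a : A, s ((1 : C) ⊗ₜ[k] a) = a ⊗ₜ[k] (1 : C)) ∧
  (∀ c : C, s (c ⊗ₜ[k] (1 : A)) = (1 : A) ⊗ₜ[k] c) ∧
  (∀ (c c' : C) (a : A), s ((c * c') ⊗ₜ[k] a) =
    (LinearMap.lTensor A (LinearMap.mul' k C))
      ((TensorProduct.assoc k A C C)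
        ((LinearMap.rTensor C s)
          ((TensorProduct.assoc k C A C).symm (c ⊗ₜ[k] (s (c' ⊗ₜ[k] a))))))) ∧
  (∀ (c : C) (a a' : A), s (c ⊗ₜ[k] (a * a')) =
    (LinearMap.rTensor C (LinearMap.mul' k A))
      ((TensorProduct.assoc k A A C).symm
        ((LinearMap.lTensor A s)
          ((TensorProduct.assoc k A C A)
            ((LinearMap.rTensor A s) ((c ⊗ₜ[k] a) ⊗ₜ[k] a'))))))

section TwistedMul

variable {k A C : Type*} [CommRing k] [Ring A] [Ring C] [Algebra k A] [Algebra k C]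
  (s : C ⊗[k] A →ₗ[k] A ⊗[k] C)

theorem lTensor_mul'_assoc_tmul (x : A ⊗[k] C) (f : C) :
    LinearMap.lTensor A (LinearMap.mul' k C) (TensorProduct.assoc k A C C (x ⊗ₜ f)) =
      x * 1 ⊗ₜ f := by
  induction x using TensorProduct.induction_on with
  | zero => simp
  | add x x' hx hx' => simp only [add_tmul, map_add, add_mul, hx, hx']
  | tmul p q => simp

theorem rTensor_mul'_assoc_symm_tmul (b : A) (x : A ⊗[k] C) :
    LinearMap.rTensor C (LinearMap.mul' k A) ((TensorProduct.assoc k A A C).symm (b ⊗ₜ x)) =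
      b ⊗ₜ 1 * x := by
  induction x using TensorProduct.induction_on with
  | zero => simp
  | add x x' hx hx' => simp only [tmul_add, map_add, mul_add, hx, hx']
  | tmul p q => simp

noncomputable def twistedMul : A ⊗[k] C →ₗ[k] A ⊗[k] C →ₗ[k] A ⊗[k] C :=
  TensorProduct.lift <| (LinearMap.llcomp k _ _ _).compl₁₂
    (LinearMap.mul k (A ⊗[k] C) ∘ₗ (TensorProduct.mk k A C).flip 1)
    ((TensorProduct.mk k C (A ⊗[k] C)).compr₂
      (TensorProduct.lift ((LinearMap.mul k (A ⊗[k] C)).compl₁₂ s (TensorProduct.mk k A C 1)) ∘ₗ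
        (TensorProduct.assoc k C A C).symm.toLinearMap))

theorem twistedMul_tmul_tmul (p e : A) (q f : C) :
    twistedMul s (p ⊗ₜ q) (e ⊗ₜ f) = p ⊗ₜ 1 * s (q ⊗ₜ e) * 1 ⊗ₜ f := by
  simp [twistedMul, mul_assoc]

theorem twistedMul_one_tmul_tmul (c : C) (b : A) (d : C) :
    twistedMul s (1 ⊗ₜ c) (b ⊗ₜ d) = s (c ⊗ₜ b) * 1 ⊗ₜ d := by
  rw [twistedMul_tmul_tmul, ← Algebra.TensorProduct.one_def, one_mul]

theorem twistedMul_tmul_tmul_one (b : A) (d : C) (a : A) :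
    twistedMul s (b ⊗ₜ d) (a ⊗ₜ 1) = b ⊗ₜ 1 * s (d ⊗ₜ a) := by
  rw [twistedMul_tmul_tmul, ← Algebra.TensorProduct.one_def, mul_one]

theorem twistedMul_tmul_one_mul (p : A) (z y : A ⊗[k] C) :
    twistedMul s (p ⊗ₜ 1 * z) y = p ⊗ₜ 1 * twistedMul s z y := by
  induction z using TensorProduct.induction_on with
  | zero => simp
  | add z z' hz hz' => simp only [mul_add, map_add, LinearMap.add_apply, hz, hz']
  | tmul p' q =>
    induction y using TensorProduct.induction_on with
    | zero => simp
    | add y y' hy hy' => simp only [map_add, mul_add, hy, hy']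
    | tmul e f =>
      rw [Algebra.TensorProduct.tmul_mul_tmul, one_mul, twistedMul_tmul_tmul, twistedMul_tmul_tmul,
        ← mul_assoc, ← mul_assoc, Algebra.TensorProduct.tmul_mul_tmul, one_mul]

theorem twistedMul_mul_one_tmul (z y : A ⊗[k] C) (f : C) :
    twistedMul s z (y * 1 ⊗ₜ f) = twistedMul s z y * 1 ⊗ₜ f := by
  induction y using TensorProduct.induction_on with
  | zero => simp
  | add y y' hy hy' => simp only [add_mul, map_add, hy, hy']
  | tmul e f' =>
    induction z using TensorProduct.induction_on with
    | zero => simp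
    | add z z' hz hz' => simp only [map_add, LinearMap.add_apply, add_mul, hz, hz']
    | tmul p q => simp [twistedMul_tmul_tmul, mul_assoc]

theorem lTensor_mul'_assoc_rTensor_assoc_symm (c : C) (y : A ⊗[k] C) :
    LinearMap.lTensor A (LinearMap.mul' k C) (TensorProduct.assoc k A C C
      (LinearMap.rTensor C s ((TensorProduct.assoc k C A C).symm (c ⊗ₜ y)))) =
      twistedMul s (1 ⊗ₜ c) y := by
  induction y using TensorProduct.induction_on with
  | zero => simp
  | add y y' hy hy' => simp only [tmul_add, map_add, hy, hy']
  | tmul e f =>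
    rw [twistedMul_one_tmul_tmul, assoc_symm_tmul, LinearMap.rTensor_tmul, lTensor_mul'_assoc_tmul]

theorem rTensor_mul'_assoc_symm_lTensor_assoc (x : A ⊗[k] C) (a : A) :
    LinearMap.rTensor C (LinearMap.mul' k A) ((TensorProduct.assoc k A A C).symm
      (LinearMap.lTensor A s (TensorProduct.assoc k A C A (x ⊗ₜ a)))) =
      twistedMul s x (a ⊗ₜ 1) := by
  induction x using TensorProduct.induction_on with
  | zero => simp
  | add x x' hx hx' => simp only [add_tmul, map_add, LinearMap.add_apply, hx, hx']
  | tmul b d =>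
    rw [twistedMul_tmul_tmul_one, assoc_tmul, LinearMap.lTensor_tmul, rTensor_mul'_assoc_symm_tmul]

def IsMulCompatible (c : C) : Prop :=
  ∀ a a' : A, s (c ⊗ₜ (a * a')) = twistedMul s (s (c ⊗ₜ a)) (a' ⊗ₜ 1)

variable {s}

theorem twistedMul_one_tmul_tmul_one_mul {c : C} (hc : IsMulCompatible s c) (b : A)
    (y : A ⊗[k] C) :
    twistedMul s (1 ⊗ₜ c) (b ⊗ₜ 1 * y) = twistedMul s (s (c ⊗ₜ b)) y := by
  induction y using TensorProduct.induction_on with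
  | zero => simp
  | add y y' hy hy' => simp only [mul_add, map_add, hy, hy']
  | tmul e f =>
    calc twistedMul s (1 ⊗ₜ c) (b ⊗ₜ 1 * e ⊗ₜ f)
        = s (c ⊗ₜ (b * e)) * 1 ⊗ₜ f := by
          rw [Algebra.TensorProduct.tmul_mul_tmul, one_mul, twistedMul_one_tmul_tmul]
      _ = twistedMul s (s (c ⊗ₜ b)) (e ⊗ₜ 1) * 1 ⊗ₜ f := by rw [hc]
      _ = twistedMul s (s (c ⊗ₜ b)) (e ⊗ₜ f) := by
          rw [← twistedMul_mul_one_tmul, Algebra.TensorProduct.tmul_mul_tmul, one_mul, mul_one]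

theorem twistedMul_mul_one_tmul_tmul_one
    (hmul : ∀ (c c' : C) (a : A), s ((c * c') ⊗ₜ a) = twistedMul s (1 ⊗ₜ c) (s (c' ⊗ₜ a)))
    (z : A ⊗[k] C) (d : C) (a : A) :
    twistedMul s (z * 1 ⊗ₜ d) (a ⊗ₜ 1) = twistedMul s z (s (d ⊗ₜ a)) := by
  induction z using TensorProduct.induction_on with
  | zero => simp
  | add z z' hz hz' => simp only [add_mul, map_add, LinearMap.add_apply, hz, hz']
  | tmul p q =>
    calc twistedMul s (p ⊗ₜ q * 1 ⊗ₜ d) (a ⊗ₜ 1)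
        = p ⊗ₜ 1 * s ((q * d) ⊗ₜ a) := by
          rw [Algebra.TensorProduct.tmul_mul_tmul, mul_one, twistedMul_tmul_tmul_one]
      _ = p ⊗ₜ 1 * twistedMul s (1 ⊗ₜ q) (s (d ⊗ₜ a)) := by rw [hmul]
      _ = twistedMul s (p ⊗ₜ q) (s (d ⊗ₜ a)) := by
          rw [← twistedMul_tmul_one_mul, Algebra.TensorProduct.tmul_mul_tmul, mul_one, one_mul]

/-- Both sides expand to `s (c ⊗ b) ⋆ s (d ⊗ a)` on `y = b ⊗ d`. -/
theorem twistedMul_assoc_one_tmul_tmul_one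
    (hmul : ∀ (c c' : C) (a : A), s ((c * c') ⊗ₜ a) = twistedMul s (1 ⊗ₜ c) (s (c' ⊗ₜ a)))
    {c : C} (hc : IsMulCompatible s c) (y : A ⊗[k] C) (a : A) :
    twistedMul s (1 ⊗ₜ c) (twistedMul s y (a ⊗ₜ 1)) =
      twistedMul s (twistedMul s (1 ⊗ₜ c) y) (a ⊗ₜ 1) := by
  induction y using TensorProduct.induction_on with
  | zero => simp
  | add y y' hy hy' => simp only [map_add, LinearMap.add_apply, hy, hy']
  | tmul b d =>
    rw [twistedMul_tmul_tmul_one, twistedMul_one_tmul_tmul_one_mul hc, twistedMul_one_tmul_tmul,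
      twistedMul_mul_one_tmul_tmul_one hmul]

theorem isMulCompatible_one (hunit : ∀ a : A, s ((1 : C) ⊗ₜ[k] a) = a ⊗ₜ[k] (1 : C)) :
    IsMulCompatible s (1 : C) := fun a a' => by
  rw [hunit, hunit, twistedMul_tmul_tmul_one, hunit, Algebra.TensorProduct.tmul_mul_tmul, mul_one]

theorem IsMulCompatible.add {x y : C} (hx : IsMulCompatible s x) (hy : IsMulCompatible s y) :
    IsMulCompatible s (x + y) := fun a a' => by
  simp only [add_tmul, map_add, LinearMap.add_apply, hx a a', hy a a']

theorem IsMulCompatible.smul {x : C} (hx : IsMulCompatible s x) (r : k) :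
    IsMulCompatible s (r • x) := fun a a' => by
  simp only [← smul_tmul', map_smul, LinearMap.smul_apply, hx a a']

theorem IsMulCompatible.mul
    (hmul : ∀ (c c' : C) (a : A), s ((c * c') ⊗ₜ a) = twistedMul s (1 ⊗ₜ c) (s (c' ⊗ₜ a)))
    {x y : C} (hx : IsMulCompatible s x) (hy : IsMulCompatible s y) :
    IsMulCompatible s (x * y) := fun a a' => calc
  s ((x * y) ⊗ₜ (a * a')) = twistedMul s (1 ⊗ₜ x) (twistedMul s (s (y ⊗ₜ a)) (a' ⊗ₜ 1)) := by
    rw [hmul, hy]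
  _ = twistedMul s (s ((x * y) ⊗ₜ a)) (a' ⊗ₜ 1) := by
    rw [twistedMul_assoc_one_tmul_tmul_one hmul hx, hmul]

variable (s) in
def mulCompatibleSubalgebra (hunit : ∀ a : A, s ((1 : C) ⊗ₜ[k] a) = a ⊗ₜ[k] (1 : C))
    (hmul : ∀ (c c' : C) (a : A), s ((c * c') ⊗ₜ a) = twistedMul s (1 ⊗ₜ c) (s (c' ⊗ₜ a))) :
    Subalgebra k C where
  carrier := {c | IsMulCompatible s c}
  zero_mem' := by simpa using (isMulCompatible_one hunit).smul (0 : k)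
  add_mem' := IsMulCompatible.add
  one_mem' := isMulCompatible_one hunit
  mul_mem' := IsMulCompatible.mul hmul
  algebraMap_mem' r := by
    simpa [Algebra.algebraMap_eq_smul_one] using (isMulCompatible_one hunit).smul r

end TwistedMul

/-- If a `k`-linear map `s : C ⊗ A → A ⊗ C` satisfies the unit conditions and the
compatibility with the multiplication of `C`, and the compatibility with the
multiplication of `A` holds on a generating set of the algebra `C`, then `s` is a
twisting map. -/
theorem statement0 {k A C : Type*} [CommRing k] [Ring A] [Ring C] [Algebra k A]
    [Algebra k C] (s : C ⊗[k] A →ₗ[k] A ⊗[k] C)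
    (h1 : ∀ a : A, s ((1 : C) ⊗ₜ[k] a) = a ⊗ₜ[k] (1 : C))
    (h2 : ∀ c : C, s (c ⊗ₜ[k] (1 : A)) = (1 : A) ⊗ₜ[k] c)
    (h3 : ∀ (c c' : C) (a : A), s ((c * c') ⊗ₜ[k] a) =
      (LinearMap.lTensor A (LinearMap.mul' k C))
        ((TensorProduct.assoc k A C C)
          ((LinearMap.rTensor C s)
            ((TensorProduct.assoc k C A C).symm (c ⊗ₜ[k] (s (c' ⊗ₜ[k] a)))))))
    (S : Set C) (hgen : Algebra.adjoin k S = ⊤)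
    (hS : ∀ c ∈ S, ∀ a a' : A, s (c ⊗ₜ[k] (a * a')) =
      (LinearMap.rTensor C (LinearMap.mul' k A))
        ((TensorProduct.assoc k A A C).symm
          ((LinearMap.lTensor A s)
            ((TensorProduct.assoc k A C A)
              ((LinearMap.rTensor A s) ((c ⊗ₜ[k] a) ⊗ₜ[k] a')))))) :
    IsTwistingMap k A C s := by
  have hmul : ∀ c c' a, s ((c * c') ⊗ₜ a) = twistedMul s (1 ⊗ₜ c) (s (c' ⊗ₜ a)) :=
    fun c c' a => by rw [h3, lTensor_mul'_assoc_rTensor_assoc_symm]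
  have hSC : S ⊆ mulCompatibleSubalgebra s h1 hmul := fun c hc a a' => by
    rw [hS c hc, LinearMap.rTensor_tmul, rTensor_mul'_assoc_symm_lTensor_assoc]
  have hall : ∀ c, c ∈ mulCompatibleSubalgebra s h1 hmul :=
    fun c => Algebra.adjoin_le hSC (hgen ▸ Algebra.mem_top)
  refine ⟨h1, h2, h3, fun c a a' => ?_⟩
  rw [hall c a a', LinearMap.rTensor_tmul, rTensor_mul'_assoc_symm_lTensor_assoc]
end

section
/- Let C = k[y]/⟨y^n⟩ and let s : C⊗A → A⊗C be k-linear, determined by maps γ^r_j : A → A via s(y^r⊗a) = Σ_{j=0}^{n-1} γ^r_j(a)⊗y^j (with γ^r_j := 0 for r ≥ n). Then s is a twisting map if and only if: (a) γ^0_j = δ_{0j}·id; (b) γ^1_j(1) = δ_{1j}; (c) γ^1_j(ab) = Σ_{i=0}^{n-1} γ^1_i(a)γ^i_j(b) for all j < n and a,b ∈ A; (d) γ^r_j = Σ_{l=0}^{j} γ^1_l ∘ γ^{r-1}_{j-l} for all j < n and r > 1. -/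
open TensorProduct

/-- The truncated polynomial algebra `k[y]/⟨y^n⟩`. -/
abbrev TruncPoly (k : Type*) [CommRing k] (n : ℕ) : Type _ :=
  Polynomial k ⧸ Ideal.span {(Polynomial.X : Polynomial k) ^ n}

/-- The class of `y` in `k[y]/⟨y^n⟩`. -/
noncomputable def truncY (k : Type*) [CommRing k] (n : ℕ) : TruncPoly k n :=
  Ideal.Quotient.mk _ Polynomial.X

/-!
The powers `1, y, …, y^(n-1)` form a `k`-basis of `C = k[y]/⟨y^n⟩`, so an element of `A ⊗ C`
is determined by its coefficients, and each twisting axiom, being linear in its `C`-arguments,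
need only be checked on powers of `y`. There it becomes an identity between the `γ^r_j`: with
`G_r = ∑ j, γ^r_j X^j` in `(End A)⟦X⟧`, the axioms say `G_0 ≡ 1`, `G_(r+t) ≡ G_r G_t (mod X^n)`,
`γ^r_j(1) = δ_rj` and `γ^r_j(ab) = ∑ i, γ^r_i(a) γ^i_j(b)`. Condition (d) says
`G_r ≡ G_1 G_(r-1)`, hence `G_r ≡ G_1^r` and multiplicativity in `r` follows; the unit and product
rules for all `r` then follow from those for `r = 1` by induction on `r`.
-/

open Finset PowerSeries TensorProduct

theorem Finset.sum_range_sum_range_eq_sum_range_sum_antidiagonal {M : Type*} [AddCommMonoid M]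
    {n : ℕ} (f : ℕ → ℕ → ℕ → M) (hf : ∀ i j, n ≤ i + j → f i j (i + j) = 0) :
    ∑ i ∈ range n, ∑ j ∈ range n, f i j (i + j) =
      ∑ m ∈ range n, ∑ p ∈ antidiagonal m, f p.1 p.2 m := by
  have hfiber : ∀ m ∈ range n, ∑ p ∈ antidiagonal m, f p.1 p.2 m =
      ∑ p ∈ range n ×ˢ range n, if m = p.1 + p.2 then f p.1 p.2 (p.1 + p.2) else 0 := by
    intro m hm
    rw [← sum_filter]
    refine sum_congr ?_ fun p hp => by rw [(mem_filter.1 hp).2]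
    ext ⟨i, j⟩
    simp only [HasAntidiagonal.mem_antidiagonal, mem_filter, mem_product, mem_range] at hm ⊢
    omega
  rw [sum_congr rfl hfiber, sum_comm (s := range n) (t := range n ×ˢ range n), sum_product]
  refine sum_congr rfl fun i _ => sum_congr rfl fun j _ => ?_
  rw [sum_ite_eq']
  split_ifs with h
  · rfl
  · exact hf i j (by simpa using h)

namespace PowerSeries

variable {R : Type*} [Semiring R] {n : ℕ}

theorem coeff_mk_mul_mk (f g : ℕ → R) (m : ℕ) :
    coeff m (mk f * mk g) = ∑ l ∈ range (m + 1), f l * g (m - l) := by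
  simp only [coeff_mul, coeff_mk, Nat.sum_antidiagonal_eq_sum_range_succ (fun i j => f i * g j)]

theorem coeff_mul_eq_of_coeff_eq {F F' G G' : R⟦X⟧} (hF : ∀ m < n, coeff m F = coeff m F')
    (hG : ∀ m < n, coeff m G = coeff m G') : ∀ m < n, coeff m (F * G) = coeff m (F' * G') := by
  intro m hm
  simp only [coeff_mul]
  refine sum_congr rfl fun p hp => ?_
  have := HasAntidiagonal.mem_antidiagonal.1 hp
  rw [hF p.1 (by omega), hG p.2 (by omega)]

theorem coeff_eq_coeff_pow_of_coeff_eq_coeff_mul (F : ℕ → R⟦X⟧)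
    (h0 : ∀ m < n, coeff m (F 0) = coeff m 1)
    (hF : ∀ r, 1 < r → ∀ m < n, coeff m (F r) = coeff m (F 1 * F (r - 1))) :
    ∀ r, ∀ m < n, coeff m (F r) = coeff m (F 1 ^ r)
  | 0 => by simpa using h0
  | 1 => by simp
  | r + 2 => fun m hm => (hF (r + 2) (by omega) m hm).trans <| by
      rw [pow_succ']
      exact coeff_mul_eq_of_coeff_eq (fun _ _ => rfl)
        (coeff_eq_coeff_pow_of_coeff_eq_coeff_mul F h0 hF (r + 1)) m hm

theorem coeff_add_eq_coeff_mul_of_coeff_eq_coeff_mul (F : ℕ → R⟦X⟧)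
    (h0 : ∀ m < n, coeff m (F 0) = coeff m 1)
    (hF : ∀ r, 1 < r → ∀ m < n, coeff m (F r) = coeff m (F 1 * F (r - 1))) (r t : ℕ) :
    ∀ m < n, coeff m (F (r + t)) = coeff m (F r * F t) := by
  have hpow := coeff_eq_coeff_pow_of_coeff_eq_coeff_mul F h0 hF
  intro m hm
  rw [hpow (r + t) m hm, pow_add]
  exact coeff_mul_eq_of_coeff_eq (fun m hm => (hpow r m hm).symm)
    (fun m hm => (hpow t m hm).symm) m hm

end PowerSeries

section TruncPoly

variable (k : Type*) [CommRing k] (n : ℕ)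

theorem truncY_pow_eq_zero {p : ℕ} (hp : n ≤ p) : truncY k n ^ p = 0 := by
  obtain ⟨q, rfl⟩ := Nat.exists_eq_add_of_le hp
  rw [pow_add, truncY, ← map_pow,
    Ideal.Quotient.eq_zero_iff_mem.2 (Ideal.mem_span_singleton_self _), zero_mul]

noncomputable def truncBasis [Nontrivial k] : Module.Basis (Fin n) k (TruncPoly k n) :=
  (AdjoinRoot.powerBasis' (Polynomial.monic_X_pow n)).basis.reindex
    (finCongr (Polynomial.natDegree_X_pow n))

theorem truncBasis_apply [Nontrivial k] (i : Fin n) : truncBasis k n i = truncY k n ^ (i : ℕ) :=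
  (Module.Basis.reindex_apply (AdjoinRoot.powerBasis' (Polynomial.monic_X_pow (R := k) n)).basis
    _ i).trans (PowerBasis.basis_eq_pow _ _)

theorem truncBasis_repr_truncY_pow [Nontrivial k] (j : ℕ) (i : Fin n) :
    (truncBasis k n).repr (truncY k n ^ j) i = if j = i then 1 else 0 := by
  by_cases hj : j < n
  · rw [← truncBasis_apply k n ⟨j, hj⟩, Module.Basis.repr_self, Finsupp.single_apply]
    simp [Fin.ext_iff]
  · rw [truncY_pow_eq_zero k n (not_lt.1 hj), map_zero, if_neg (by omega)]
    rfl

variable {k n}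

theorem TruncPoly.induction_on {P : TruncPoly k n → Prop} (c : TruncPoly k n)
    (pow : ∀ r : ℕ, P (truncY k n ^ r)) (smul : ∀ (x : k) c, P c → P (x • c))
    (add : ∀ c c', P c → P c' → P (c + c')) : P c := by
  obtain ⟨p, rfl⟩ := Ideal.Quotient.mk_surjective c
  induction p using Polynomial.induction_on' with
  | add p q hp hq => rw [map_add]; exact add _ _ hp hq
  | monomial i x =>
    rw [← Polynomial.smul_X_eq_monomial, ← Ideal.Quotient.mkₐ_eq_mk k, map_smul, map_pow]
    exact smul x _ (pow i)

theorem sum_tmul_truncY_pow_inj {M : Type*} [AddCommMonoid M] [Module k M] {a b : ℕ → M} :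
    ∑ j ∈ range n, a j ⊗ₜ[k] (truncY k n ^ j) = ∑ j ∈ range n, b j ⊗ₜ[k] (truncY k n ^ j) ↔
      ∀ j < n, a j = b j := by
  refine ⟨fun h m hm => ?_, fun h => sum_congr rfl fun j hj => by rw [h j (mem_range.1 hj)]⟩
  rcases subsingleton_or_nontrivial k with hk | hk
  · have := Module.subsingleton k M
    exact Subsingleton.elim _ _
  have coord : ∀ c : ℕ → M, TensorProduct.equivFinsuppOfBasisRight (truncBasis k n)
      (∑ j ∈ range n, c j ⊗ₜ[k] (truncY k n ^ j)) ⟨m, hm⟩ = c m := by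
    intro c
    simp [truncBasis_repr_truncY_pow, hm]
  rw [← coord a, h, coord b]

theorem tmul_truncY_pow_eq_sum {M : Type*} [AddCommMonoid M] [Module k M] (a : M) (p : ℕ) :
    a ⊗ₜ[k] (truncY k n ^ p) = ∑ j ∈ range n, (if j = p then a else 0) ⊗ₜ[k] (truncY k n ^ j) := by
  by_cases hp : p < n
  · rw [sum_eq_single_of_mem p (mem_range.2 hp) fun j _ hj => by rw [if_neg hj, zero_tmul],
      if_pos rfl]
  · rw [truncY_pow_eq_zero k n (not_lt.1 hp), tmul_zero]
    exact (sum_eq_zero fun j hj => by rw [if_neg (by simp at hj; omega), zero_tmul]).symm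

end TruncPoly

section Twisting

variable {k A : Type*} [CommRing k] [Ring A] [Algebra k A] {n : ℕ}
  {s : TruncPoly k n ⊗[k] A →ₗ[k] A ⊗[k] TruncPoly k n} {γ : ℕ → ℕ → Module.End k A}

theorem twist_truncY_pow_tmul (hext : ∀ r j, n ≤ r → j < n → γ r j = 0)
    (hs : ∀ r < n, ∀ a : A,
      s ((truncY k n ^ r) ⊗ₜ[k] a) = ∑ j ∈ range n, γ r j a ⊗ₜ[k] (truncY k n ^ j))
    (r : ℕ) (a : A) :
    s ((truncY k n ^ r) ⊗ₜ[k] a) = ∑ j ∈ range n, γ r j a ⊗ₜ[k] (truncY k n ^ j) := by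
  by_cases hr : r < n
  · exact hs r hr a
  · rw [truncY_pow_eq_zero k n (not_lt.1 hr), zero_tmul, map_zero]
    refine (sum_eq_zero fun j hj => ?_).symm
    rw [hext r j (not_lt.1 hr) (mem_range.1 hj), LinearMap.zero_apply, zero_tmul]

theorem twist_one_tmul_iff
    (hs : ∀ (r : ℕ) (a : A),
      s ((truncY k n ^ r) ⊗ₜ[k] a) = ∑ j ∈ range n, γ r j a ⊗ₜ[k] (truncY k n ^ j)) :
    (∀ a : A, s (1 ⊗ₜ[k] a) = a ⊗ₜ[k] 1) ↔ ∀ j < n, γ 0 j = if j = 0 then 1 else 0 := by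
  have key : ∀ a : A, s (1 ⊗ₜ[k] a) = a ⊗ₜ[k] 1 ↔ ∀ j < n, γ 0 j a = if j = 0 then a else 0 := by
    intro a
    rw [← pow_zero (truncY k n), hs, tmul_truncY_pow_eq_sum, sum_tmul_truncY_pow_inj]
  simp only [key]
  constructor
  · intro h j hj
    ext a
    rw [h a j hj]
    split_ifs <;> rfl
  · intro h a j hj
    rw [h j hj]
    split_ifs <;> rfl

theorem twist_tmul_one_iff
    (hs : ∀ (r : ℕ) (a : A),
      s ((truncY k n ^ r) ⊗ₜ[k] a) = ∑ j ∈ range n, γ r j a ⊗ₜ[k] (truncY k n ^ j)) :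
    (∀ c, s (c ⊗ₜ[k] 1) = 1 ⊗ₜ[k] c) ↔ ∀ r, ∀ j < n, γ r j 1 = if j = r then 1 else 0 := by
  have key : ∀ r, s ((truncY k n ^ r) ⊗ₜ[k] 1) = 1 ⊗ₜ[k] (truncY k n ^ r) ↔
      ∀ j < n, γ r j 1 = if j = r then 1 else 0 := by
    intro r
    rw [hs, tmul_truncY_pow_eq_sum, sum_tmul_truncY_pow_inj]
  refine ⟨fun h r => (key r).1 (h _), fun h c => ?_⟩
  induction c using TruncPoly.induction_on with
  | pow r => exact (key r).2 (h r)
  | smul x c hc => rw [← smul_tmul', map_smul, hc, tmul_smul]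
  | add c c' hc hc' => rw [add_tmul, map_add, hc, hc', tmul_add]

theorem twist_mul_tmul_rhs_truncY_pow
    (hs : ∀ (r : ℕ) (a : A),
      s ((truncY k n ^ r) ⊗ₜ[k] a) = ∑ j ∈ range n, γ r j a ⊗ₜ[k] (truncY k n ^ j))
    (r t : ℕ) (a : A) :
    (LinearMap.lTensor A (LinearMap.mul' k (TruncPoly k n)))
      ((TensorProduct.assoc k A (TruncPoly k n) (TruncPoly k n))
        ((LinearMap.rTensor (TruncPoly k n) s)
          ((TensorProduct.assoc k (TruncPoly k n) A (TruncPoly k n)).symm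
            ((truncY k n ^ r) ⊗ₜ[k] s ((truncY k n ^ t) ⊗ₜ[k] a))))) =
      ∑ m ∈ range n, coeff m (mk (γ r) * mk (γ t)) a ⊗ₜ[k] (truncY k n ^ m) := by
  calc _ = ∑ i ∈ range n, ∑ j ∈ range n, γ r i (γ t j a) ⊗ₜ[k] (truncY k n ^ (i + j)) := by
        rw [hs t a, sum_comm]
        simp only [tmul_sum, map_sum, assoc_symm_tmul, LinearMap.rTensor_tmul, hs, sum_tmul,
          assoc_tmul, LinearMap.lTensor_tmul, LinearMap.mul'_apply, ← pow_add]
    _ = ∑ m ∈ range n, ∑ p ∈ antidiagonal m, γ r p.1 (γ t p.2 a) ⊗ₜ[k] (truncY k n ^ m) :=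
        sum_range_sum_range_eq_sum_range_sum_antidiagonal
          (fun i j m => γ r i (γ t j a) ⊗ₜ[k] (truncY k n ^ m))
          fun i j h => by rw [truncY_pow_eq_zero k n h, tmul_zero]
    _ = _ := by
        simp only [coeff_mul, coeff_mk, LinearMap.sum_apply, Module.End.mul_apply, sum_tmul]

theorem twist_tmul_mul_rhs_truncY_pow
    (hs : ∀ (r : ℕ) (a : A),
      s ((truncY k n ^ r) ⊗ₜ[k] a) = ∑ j ∈ range n, γ r j a ⊗ₜ[k] (truncY k n ^ j))
    (r : ℕ) (a a' : A) :
    (LinearMap.rTensor (TruncPoly k n) (LinearMap.mul' k A))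
      ((TensorProduct.assoc k A A (TruncPoly k n)).symm
        ((LinearMap.lTensor A s)
          ((TensorProduct.assoc k A (TruncPoly k n) A)
            ((LinearMap.rTensor A s) (((truncY k n ^ r) ⊗ₜ[k] a) ⊗ₜ[k] a'))))) =
      ∑ m ∈ range n, (∑ i ∈ range n, γ r i a * γ i m a') ⊗ₜ[k] (truncY k n ^ m) := by
  rw [LinearMap.rTensor_tmul, hs r a]
  simp only [sum_tmul, map_sum, assoc_tmul, LinearMap.lTensor_tmul, hs, tmul_sum, assoc_symm_tmul,
    LinearMap.rTensor_tmul, LinearMap.mul'_apply]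
  exact sum_comm

theorem twist_mul_tmul_iff
    (hs : ∀ (r : ℕ) (a : A),
      s ((truncY k n ^ r) ⊗ₜ[k] a) = ∑ j ∈ range n, γ r j a ⊗ₜ[k] (truncY k n ^ j)) :
    (∀ (c c' : TruncPoly k n) (a : A), s ((c * c') ⊗ₜ[k] a) =
      (LinearMap.lTensor A (LinearMap.mul' k (TruncPoly k n)))
        ((TensorProduct.assoc k A (TruncPoly k n) (TruncPoly k n))
          ((LinearMap.rTensor (TruncPoly k n) s)
            ((TensorProduct.assoc k (TruncPoly k n) A (TruncPoly k n)).symm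
              (c ⊗ₜ[k] (s (c' ⊗ₜ[k] a))))))) ↔
      ∀ r t, ∀ m < n, γ (r + t) m = coeff m (mk (γ r) * mk (γ t)) := by
  constructor
  · intro h r t m hm
    ext a
    have hrt := h (truncY k n ^ r) (truncY k n ^ t) a
    rw [← pow_add, hs, twist_mul_tmul_rhs_truncY_pow hs, sum_tmul_truncY_pow_inj] at hrt
    exact hrt m hm
  · intro h c c' a
    induction c using TruncPoly.induction_on generalizing c' with
    | pow r =>
      induction c' using TruncPoly.induction_on with
      | pow t =>
        rw [← pow_add, hs, twist_mul_tmul_rhs_truncY_pow hs, sum_tmul_truncY_pow_inj]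
        intro m hm
        rw [h r t m hm]
      | smul x c' hc' =>
        simp only [mul_smul_comm, ← smul_tmul', map_smul, tmul_smul, hc']
      | add c₁ c₂ hc₁ hc₂ =>
        simp only [mul_add, add_tmul, map_add, tmul_add, hc₁, hc₂]
    | smul x c hc =>
      simp only [smul_mul_assoc, ← smul_tmul', map_smul, hc]
    | add c₁ c₂ hc₁ hc₂ =>
      simp only [add_mul, add_tmul, map_add, hc₁, hc₂]

theorem twist_tmul_mul_iff
    (hs : ∀ (r : ℕ) (a : A),
      s ((truncY k n ^ r) ⊗ₜ[k] a) = ∑ j ∈ range n, γ r j a ⊗ₜ[k] (truncY k n ^ j)) :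
    (∀ (c : TruncPoly k n) (a a' : A), s (c ⊗ₜ[k] (a * a')) =
      (LinearMap.rTensor (TruncPoly k n) (LinearMap.mul' k A))
        ((TensorProduct.assoc k A A (TruncPoly k n)).symm
          ((LinearMap.lTensor A s)
            ((TensorProduct.assoc k A (TruncPoly k n) A)
              ((LinearMap.rTensor A s) ((c ⊗ₜ[k] a) ⊗ₜ[k] a')))))) ↔
      ∀ r, ∀ m < n, ∀ a a' : A, γ r m (a * a') = ∑ i ∈ range n, γ r i a * γ i m a' := by
  constructor
  · intro h r m hm a a'
    have hr := h (truncY k n ^ r) a a'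
    rw [hs, twist_tmul_mul_rhs_truncY_pow hs, sum_tmul_truncY_pow_inj] at hr
    exact hr m hm
  · intro h c a a'
    induction c using TruncPoly.induction_on with
    | pow r =>
      rw [hs, twist_tmul_mul_rhs_truncY_pow hs, sum_tmul_truncY_pow_inj]
      exact fun m hm => h r m hm a a'
    | smul x c hc => simp only [← smul_tmul', map_smul, hc]
    | add c₁ c₂ hc₁ hc₂ => simp only [add_tmul, map_add, hc₁, hc₂]

theorem isTwistingMap_iff
    (hs : ∀ (r : ℕ) (a : A),
      s ((truncY k n ^ r) ⊗ₜ[k] a) = ∑ j ∈ range n, γ r j a ⊗ₜ[k] (truncY k n ^ j)) :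
    IsTwistingMap k A (TruncPoly k n) s ↔
      (∀ j < n, γ 0 j = if j = 0 then 1 else 0) ∧
      (∀ r, ∀ j < n, γ r j 1 = if j = r then 1 else 0) ∧
      (∀ r t, ∀ m < n, γ (r + t) m = coeff m (mk (γ r) * mk (γ t))) ∧
      (∀ r, ∀ m < n, ∀ a a' : A, γ r m (a * a') = ∑ i ∈ range n, γ r i a * γ i m a') := by
  rw [IsTwistingMap, twist_one_tmul_iff hs, twist_tmul_one_iff hs, twist_mul_tmul_iff hs,
    twist_tmul_mul_iff hs]

end Twisting

section Gamma

variable {k A : Type*} [CommRing k] [Ring A] [Algebra k A] {n : ℕ} {γ : ℕ → ℕ → Module.End k A}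

theorem gamma_apply_one (ha : ∀ j < n, γ 0 j = if j = 0 then 1 else 0)
    (hb : ∀ j < n, γ 1 j 1 = if j = 1 then 1 else 0)
    (hmul : ∀ r t, ∀ m < n, γ (r + t) m = coeff m (mk (γ r) * mk (γ t))) :
    ∀ r, ∀ j < n, γ r j 1 = if j = r then 1 else 0
  | 0, j, hj => by
    rw [ha j hj]
    split_ifs <;> rfl
  | r + 1, j, hj => by
    have hterm : ∀ l ∈ range (j + 1), (γ 1 l * γ r (j - l)) 1 =
        if l = 1 then (if j - l = r then 1 else 0) else 0 := by
      intro l hl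
      have hl : l ≤ j := Nat.lt_succ_iff.1 (mem_range.1 hl)
      rw [Module.End.mul_apply, gamma_apply_one ha hb hmul r (j - l) (by omega), apply_ite (γ 1 l),
        hb l (by omega), map_zero]
      split_ifs <;> rfl
    rw [add_comm, hmul 1 r j hj, coeff_mk_mul_mk, LinearMap.sum_apply, sum_congr rfl hterm]
    simp only [sum_ite_eq', mem_range]
    split_ifs <;> first | rfl | (exfalso; omega)

theorem gamma_map_mul (hext : ∀ r j, n ≤ r → j < n → γ r j = 0)
    (ha : ∀ j < n, γ 0 j = if j = 0 then 1 else 0)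
    (hc : ∀ j < n, ∀ a b : A, γ 1 j (a * b) = ∑ i ∈ range n, γ 1 i a * γ i j b)
    (hmul : ∀ r t, ∀ m < n, γ (r + t) m = coeff m (mk (γ r) * mk (γ t))) :
    ∀ r, ∀ m < n, ∀ a b : A, γ r m (a * b) = ∑ i ∈ range n, γ r i a * γ i m b
  | 0, m, hm, a, b => by
    rw [sum_eq_single_of_mem 0 (mem_range.2 (by omega)) fun i hi hi0 => by
      rw [ha i (mem_range.1 hi), if_neg hi0, LinearMap.zero_apply, zero_mul]]
    simp only [ha 0 (by omega), ha m hm]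
    split_ifs <;> simp
  | r + 1, m, hm, a, b => by
    have hcomp : ∀ q i, ∀ m < n, ∀ x : A,
        ∑ p ∈ antidiagonal m, γ q p.1 (γ i p.2 x) = γ (q + i) m x := fun q i m hm x => by
      simp only [hmul q i m hm, coeff_mul, coeff_mk, LinearMap.sum_apply, Module.End.mul_apply]
    calc γ (r + 1) m (a * b) = ∑ p ∈ antidiagonal m, γ 1 p.1 (γ r p.2 (a * b)) := by
          rw [add_comm, hcomp 1 r m hm]
      _ = ∑ p ∈ antidiagonal m, ∑ i ∈ range n, ∑ q ∈ range n,
            γ 1 q (γ r i a) * γ q p.1 (γ i p.2 b) := by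
          refine sum_congr rfl fun p hp => ?_
          have hp := HasAntidiagonal.mem_antidiagonal.1 hp
          rw [gamma_map_mul hext ha hc hmul r p.2 (by omega), map_sum]
          exact sum_congr rfl fun i _ => hc p.1 (by omega) _ _
      _ = ∑ i ∈ range n, ∑ q ∈ range n, ∑ p ∈ antidiagonal m,
            γ 1 q (γ r i a) * γ q p.1 (γ i p.2 b) := by
          rw [sum_comm]
          exact sum_congr rfl fun i _ => sum_comm
      _ = ∑ q ∈ range n, ∑ i ∈ range n, γ 1 q (γ r i a) * γ (q + i) m b := by
          rw [sum_comm]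
          simp only [← hcomp _ _ m hm, mul_sum]
      _ = ∑ l ∈ range n, ∑ p ∈ antidiagonal l, γ 1 p.1 (γ r p.2 a) * γ l m b :=
          sum_range_sum_range_eq_sum_range_sum_antidiagonal
            (fun q i l => γ 1 q (γ r i a) * γ l m b)
            fun q i h => by rw [hext (q + i) m h hm, LinearMap.zero_apply, mul_zero]
      _ = ∑ l ∈ range n, γ (r + 1) l a * γ l m b := by
          refine sum_congr rfl fun l hl => ?_
          rw [← sum_mul, add_comm, hcomp 1 r l (mem_range.1 hl)]

end Gamma

theorem statement1_general {k A : Type*} [CommRing k] [Ring A] [Algebra k A] (n : ℕ)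
    (s : TruncPoly k n ⊗[k] A →ₗ[k] A ⊗[k] TruncPoly k n)
    (γ : ℕ → ℕ → Module.End k A)
    (hext : ∀ r j, n ≤ r → j < n → γ r j = 0)
    (hs : ∀ r < n, ∀ a : A,
      s (((truncY k n) ^ r) ⊗ₜ[k] a) =
        ∑ j ∈ Finset.range n, γ r j a ⊗ₜ[k] ((truncY k n) ^ j)) :
    IsTwistingMap k A (TruncPoly k n) s ↔
      ((∀ j < n, γ 0 j = if j = 0 then 1 else 0) ∧
       (∀ j < n, γ 1 j 1 = if j = 1 then 1 else 0) ∧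
       (∀ j < n, ∀ a b : A,
          γ 1 j (a * b) = ∑ i ∈ Finset.range n, γ 1 i a * γ i j b) ∧
       (∀ r j, 1 < r → j < n →
          γ r j = ∑ l ∈ Finset.range (j + 1), γ 1 l * γ (r - 1) (j - l))) := by
  have hd_iff : ∀ r j, (γ r j = ∑ l ∈ range (j + 1), γ 1 l * γ (r - 1) (j - l)) ↔
      coeff j (mk (γ r)) = coeff j (mk (γ 1) * mk (γ (r - 1))) := fun r j => by
    rw [coeff_mk, coeff_mk_mul_mk]
  rw [isTwistingMap_iff (twist_truncY_pow_tmul hext hs)]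
  constructor
  · rintro ⟨ha, hone, hmul, hmap⟩
    refine ⟨ha, fun j => hone 1 j, fun j hj => hmap 1 j hj, fun r j hr hj => (hd_iff r j).2 ?_⟩
    rw [coeff_mk, ← hmul, Nat.add_sub_cancel' hr.le]
    exact hj
  · rintro ⟨ha, hb, hc, hd⟩
    have hmul : ∀ r t, ∀ m < n, γ (r + t) m = coeff m (mk (γ r) * mk (γ t)) := by
      intro r t m hm
      rw [← coeff_mk m (γ (r + t))]
      refine coeff_add_eq_coeff_mul_of_coeff_eq_coeff_mul (fun r => mk (γ r))
        (fun m hm => by rw [coeff_mk, coeff_one, ha m hm]) (fun r hr j hj => ?_) r t m hm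
      exact (hd_iff r j).1 (hd r j hr hj)
    exact ⟨ha, gamma_apply_one ha hb hmul, hmul, gamma_map_mul hext ha hc hmul⟩

/-- A linear map `s : k[y]/⟨y^n⟩ ⊗ A → A ⊗ k[y]/⟨y^n⟩` determined by the maps `γ^r_j`
(with `γ^r_j = 0` for `r ≥ n`) is a twisting map iff the conditions (a)-(d) hold. -/
theorem statement1 {k A : Type*} [CommRing k] [Ring A] [Algebra k A] (n : ℕ)
    (hn : 0 < n)
    (s : TruncPoly k n ⊗[k] A →ₗ[k] A ⊗[k] TruncPoly k n)
    (γ : ℕ → ℕ → Module.End k A)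
    (hext : ∀ r j, n ≤ r → j < n → γ r j = 0)
    (hs : ∀ r < n, ∀ a : A,
      s (((truncY k n) ^ r) ⊗ₜ[k] a) =
        ∑ j ∈ Finset.range n, γ r j a ⊗ₜ[k] ((truncY k n) ^ j)) :
    IsTwistingMap k A (TruncPoly k n) s ↔
      ((∀ j < n, γ 0 j = if j = 0 then 1 else 0) ∧
       (∀ j < n, γ 1 j 1 = if j = 1 then 1 else 0) ∧
       (∀ j < n, ∀ a b : A,
          γ 1 j (a * b) = ∑ i ∈ Finset.range n, γ 1 i a * γ i j b) ∧
       (∀ r j, 1 < r → j < n →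
          γ r j = ∑ l ∈ Finset.range (j + 1), γ 1 l * γ (r - 1) (j - l))) :=
  statement1_general n s γ hext hs
end

section
/- Let γ^r_j (0 ≤ j < n, r ≥ 0) be a family of maps A → A satisfying the Composition law, such that there exist 1 ≤ h ≤ n and x ∈ A with γ^h_0 = 0 and q := γ^{h-1}_0(x) right cancelable, and such that γ^h_0(aa') = Σ_{i=0}^{n-1} γ^h_i(a)γ^i_0(a') for all a,a' ∈ A. Then γ^i_j = 0 for all 0 ≤ j ≤ h-1 and i ≥ h. -/
/-!
Composing with `γ^h_0 = 0` kills `γ^r_0` for every `r ≥ h`, and the Composition law with `j = 0`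
gives `γ^i_0 ∘ γ^m_0 = γ^{i+m}_0`. Hence, if `γ^h_l = 0` for all `l < j`, the product formula
applied to `a` and `γ^{h-1-j}_0(x)` collapses to `0 = γ^h_j(a) q`, and cancelling `q` gives
`γ^h_j = 0`. Finally the Composition law with `i = h` writes every `γ^r_j`, `r ≥ h`, `j < h`,
as a sum of terms with a factor `γ^h_l`, `l ≤ j`.
-/

open Finset

def CompositionLaw {R : Type*} [Semiring R] (n : ℕ) (γ : ℕ → ℕ → R) : Prop :=
  ∀ r j i, j < n → i ≤ r → γ r j = ∑ l ∈ range (j + 1), γ i l * γ (r - i) (j - l)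

namespace CompositionLaw

section Semiring

variable {R : Type*} [Semiring R] {n : ℕ} {γ : ℕ → ℕ → R}

theorem zero_eq_mul (hγ : CompositionLaw n γ) (hn : 0 < n) {r i : ℕ} (hi : i ≤ r) :
    γ r 0 = γ i 0 * γ (r - i) 0 := by
  simpa using hγ r 0 i hn hi

theorem eq_zero_of_le {h m : ℕ} (hγ : CompositionLaw n γ) (hm : m < n)
    (hvanish : ∀ l ≤ m, γ h l = 0) {i : ℕ} (hi : h ≤ i) : γ i m = 0 := by
  rw [hγ i m h hm hi]
  exact sum_eq_zero fun l hl => by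
    rw [hvanish l (Nat.lt_succ_iff.1 (mem_range.1 hl)), zero_mul]

end Semiring

section Ring

variable {k A : Type*} [CommRing k] [Ring A] [Algebra k A] {n : ℕ}
  {γ : ℕ → ℕ → Module.End k A}

theorem apply_zero_apply_zero (hγ : CompositionLaw n γ) (hn : 0 < n) (i m : ℕ) (x : A) :
    γ i 0 (γ m 0 x) = γ (i + m) 0 x := by
  rw [hγ.zero_eq_mul hn (Nat.le_add_right i m), Nat.add_sub_cancel_left, Module.End.mul_apply]

theorem eq_zero_of_lt {h : ℕ} (hγ : CompositionLaw n γ) (hhn : h ≤ n) (hγh : γ h 0 = 0)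
    {x : A} (hq : IsRightRegular (γ (h - 1) 0 x))
    (hprod : ∀ a a' : A, γ h 0 (a * a') = ∑ i ∈ range n, γ h i a * γ i 0 a') :
    ∀ j < h, γ h j = 0 := by
  intro j
  induction j using Nat.strong_induction_on with
  | _ j ih =>
  intro hj
  have hn : 0 < n := by omega
  have hsum (a : A) :
      ∑ i ∈ range n, γ h i a * γ i 0 (γ (h - 1 - j) 0 x) = γ h j a * γ (h - 1) 0 x := by
    rw [sum_eq_single_of_mem j (mem_range.2 (by omega))]
    · rw [hγ.apply_zero_apply_zero hn, Nat.add_sub_of_le (by omega : j ≤ h - 1)]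
    · intro i _ hij
      rcases hij.lt_or_gt with hlt | hgt
      · rw [ih i hlt (hlt.trans hj), LinearMap.zero_apply, zero_mul]
      · rw [hγ.apply_zero_apply_zero hn, hγ.zero_eq_mul hn (by omega : h ≤ i + (h - 1 - j)),
          hγh, zero_mul, LinearMap.zero_apply, mul_zero]
  ext a
  refine hq (?_ : γ h j a * _ = 0 * _)
  rw [← hsum, ← hprod, hγh, LinearMap.zero_apply, zero_mul]

end Ring

end CompositionLaw

theorem statement8_general {k A : Type*} [CommRing k] [Ring A] [Algebra k A] (n h : ℕ)
    (γ : ℕ → ℕ → Module.End k A)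
    (hcomp : ∀ r j i, j < n → i ≤ r →
      γ r j = ∑ l ∈ Finset.range (j + 1), γ i l * γ (r - i) (j - l))
    (hh1 : 1 ≤ h) (hhn : h ≤ n) (x : A)
    (hγh : γ h 0 = 0)
    (hq : ∀ a a' : A, a * γ (h - 1) 0 x = a' * γ (h - 1) 0 x → a = a')
    (hprod : ∀ a a' : A,
      γ h 0 (a * a') = ∑ i ∈ Finset.range n, γ h i a * γ i 0 a') :
    ∀ i j, h ≤ i → j ≤ h - 1 → γ i j = 0 := by
  have hγ : CompositionLaw n γ := hcomp
  intro i j hi hj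
  refine hγ.eq_zero_of_le (by omega) (fun l hl => ?_) hi
  exact hγ.eq_zero_of_lt hhn hγh (fun a a' => hq a a') hprod l (by omega)

/-- If the maps `γ^r_j : A → A` satisfy the Composition law, `γ^h_0 = 0` with
`q := γ^{h-1}_0(x)` right cancelable, and the product formula for `γ^h_0`, then
`γ^i_j = 0` for all `0 ≤ j ≤ h-1` and `i ≥ h`. -/
theorem statement8 {k A : Type*} [CommRing k] [Ring A] [Algebra k A] (n h : ℕ)
    (γ : ℕ → ℕ → Module.End k A)
    (hγ0 : ∀ j, γ 0 j = if j = 0 then 1 else 0)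
    (hcomp : ∀ r j i, j < n → i ≤ r →
      γ r j = ∑ l ∈ Finset.range (j + 1), γ i l * γ (r - i) (j - l))
    (hh1 : 1 ≤ h) (hhn : h ≤ n) (x : A)
    (hγh : γ h 0 = 0)
    (hq : ∀ a a' : A, a * γ (h - 1) 0 x = a' * γ (h - 1) 0 x → a = a')
    (hprod : ∀ a a' : A,
      γ h 0 (a * a') = ∑ i ∈ Finset.range n, γ h i a * γ i 0 a') :
    ∀ i j, h ≤ i → j ≤ h - 1 → γ i j = 0 :=
  statement8_general n h γ hcomp hh1 hhn x hγh hq hprod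
end

section
/- Let D be a k-algebra and g : D → D a k-linear map with g^h = 0, and suppose there exists x ∈ D with q := g^{h-1}(x) invertible. Assume E := ker g is a k-subalgebra of D and g is right E-linear. Then D is a free right E-module of rank h with basis {x, g(x), …, g^{h-1}(x)}. -/
/-!
Write `E = ker g`. Since `g (a * b) = g a * b` for `b ∈ E`, applying `g` to `∑ gⁱ(x) cᵢ` with
all `cᵢ ∈ E` amounts to replacing `x` by `g x`. Both halves of the theorem then follow by
induction on `h`, since replacing `(h, x)` by `(h - 1, g x)` leaves `q = g^{h-1}(x)` unchanged. In each step the one new coefficient is the one in front of `q`: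
for uniqueness it vanishes because `q` is a unit, and for existence the remainder `e ∈ E` is
written as `q * (q⁻¹ * e)`. Here `q⁻¹ ∈ E` because `g a = 0 ↔ g (a * q) = 0` (as
`g (a * q) = g a * q` and `q` is a unit), applied first to `a = 1` and then to `a = q⁻¹`.
-/

open Finset

section RightKernelLinear

variable {R : Type*} [Semiring R]

theorem Module.End.pow_apply_apply {M : Type*} [AddCommMonoid M] [Module R M]
    (f : Module.End R M) (n : ℕ) (m : M) : (f ^ n) (f m) = (f ^ (n + 1)) m := by
  rw [pow_succ, Module.End.mul_apply]

theorem Module.End.apply_pow_apply {M : Type*} [AddCommMonoid M] [Module R M]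
    (f : Module.End R M) (n : ℕ) (m : M) : f ((f ^ n) m) = (f ^ (n + 1)) m := by
  rw [pow_succ', Module.End.mul_apply]

variable {D : Type*} [Ring D] [Module R D] {g : Module.End R D}

theorem apply_unit_inv_eq_zero (hlin : ∀ a b : D, g b = 0 → g (a * b) = g a * b)
    (u : Dˣ) (hu : g u = 0) : g ↑u⁻¹ = 0 := by
  have key : ∀ a : D, g (a * u) = 0 → g a = 0 := fun a ha => by
    rwa [hlin a u hu, Units.mul_left_eq_zero] at ha
  have hone : g 1 = 0 := key 1 (by rwa [one_mul])
  exact key _ (by rwa [Units.inv_mul])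

theorem exists_mul_eq_of_isUnit (hlin : ∀ a b : D, g b = 0 → g (a * b) = g a * b)
    {q e : D} (hq : IsUnit q) (hgq : g q = 0) (he : g e = 0) :
    ∃ c, g c = 0 ∧ e = q * c := by
  obtain ⟨u, rfl⟩ := hq
  refine ⟨↑u⁻¹ * e, ?_, (Units.mul_inv_cancel_left u e).symm⟩
  rw [hlin _ _ he, apply_unit_inv_eq_zero hlin u hgq, zero_mul]

theorem apply_sum_pow_mul (hlin : ∀ a b : D, g b = 0 → g (a * b) = g a * b)
    {n : ℕ} (x : D) {c : Fin n → D} (hc : ∀ i, g (c i) = 0) :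
    g (∑ i : Fin n, (g ^ (i : ℕ)) x * c i) = ∑ i : Fin n, (g ^ (i : ℕ)) (g x) * c i := by
  rw [map_sum]
  refine sum_congr rfl fun i _ => ?_
  rw [hlin _ _ (hc i), Module.End.apply_pow_apply, Module.End.pow_apply_apply]

theorem eq_zero_of_sum_pow_mul_eq_zero_of_castSucc {n : ℕ} {x : D} (hq : IsUnit ((g ^ n) x))
    {c : Fin (n + 1) → D} (hsum : ∑ i : Fin (n + 1), (g ^ (i : ℕ)) x * c i = 0)
    (hinit : ∀ i : Fin n, c i.castSucc = 0) : c = 0 := by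
  have hlast : c (Fin.last n) = 0 := by
    simpa [Fin.sum_univ_castSucc, hinit, hq.mul_right_eq_zero] using hsum
  funext i
  induction i using Fin.lastCases with
  | last => exact hlast
  | cast i => exact hinit i

theorem eq_zero_of_sum_pow_mul_eq_zero (hlin : ∀ a b : D, g b = 0 → g (a * b) = g a * b)
    {n : ℕ} {x : D} (hx : (g ^ (n + 1)) x = 0) (hq : IsUnit ((g ^ n) x))
    {c : Fin (n + 1) → D} (hc : ∀ i, g (c i) = 0)
    (hsum : ∑ i : Fin (n + 1), (g ^ (i : ℕ)) x * c i = 0) : c = 0 := by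
  induction n generalizing x with
  | zero => exact eq_zero_of_sum_pow_mul_eq_zero_of_castSucc hq hsum finZeroElim
  | succ n ih =>
    suffices hinit : (fun i : Fin (n + 1) => c i.castSucc) = 0 from
      eq_zero_of_sum_pow_mul_eq_zero_of_castSucc hq hsum (congr_fun hinit)
    refine ih (x := g x) (by rwa [g.pow_apply_apply]) (by rwa [g.pow_apply_apply])
      (fun i => hc _) ?_
    have := congr_arg g hsum
    rwa [apply_sum_pow_mul hlin x hc, map_zero, Fin.sum_univ_castSucc, Fin.val_last,
      g.pow_apply_apply, hx, zero_mul, add_zero] at this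

theorem exists_sum_pow_mul_eq_of_apply_sub_eq_zero
    (hlin : ∀ a b : D, g b = 0 → g (a * b) = g a * b)
    {n : ℕ} {x : D} (hx : (g ^ (n + 1)) x = 0) (hq : IsUnit ((g ^ n) x))
    {c : Fin n → D} (hc : ∀ i, g (c i) = 0) {d : D}
    (hd : g (d - ∑ i : Fin n, (g ^ (i : ℕ)) x * c i) = 0) :
    ∃ c' : Fin (n + 1) → D,
      (∀ i, g (c' i) = 0) ∧ d = ∑ i : Fin (n + 1), (g ^ (i : ℕ)) x * c' i := by
  obtain ⟨e, he, hde⟩ := exists_mul_eq_of_isUnit hlin hq (by rwa [g.apply_pow_apply]) hd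
  refine ⟨Fin.snoc c e, fun i => ?_, ?_⟩
  · induction i using Fin.lastCases with
    | last => simpa using he
    | cast i => simpa using hc i
  · simp only [Fin.sum_univ_castSucc, Fin.snoc_castSucc, Fin.snoc_last, Fin.val_castSucc,
      Fin.val_last, ← hde, add_sub_cancel]

theorem exists_sum_pow_mul_eq (hlin : ∀ a b : D, g b = 0 → g (a * b) = g a * b)
    {n : ℕ} {x : D} (hx : (g ^ (n + 1)) x = 0) (hq : IsUnit ((g ^ n) x))
    {d : D} (hd : (g ^ (n + 1)) d = 0) :
    ∃ c : Fin (n + 1) → D,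
      (∀ i, g (c i) = 0) ∧ d = ∑ i : Fin (n + 1), (g ^ (i : ℕ)) x * c i := by
  induction n generalizing x d with
  | zero =>
    exact exists_sum_pow_mul_eq_of_apply_sub_eq_zero hlin hx hq (c := finZeroElim)
      finZeroElim (by simpa using hd)
  | succ n ih =>
    obtain ⟨c, hc, hgdc⟩ := ih (x := g x) (by rwa [g.pow_apply_apply])
      (by rwa [g.pow_apply_apply]) (by rwa [g.pow_apply_apply])
    refine exists_sum_pow_mul_eq_of_apply_sub_eq_zero hlin hx hq hc ?_
    rw [map_sub, apply_sum_pow_mul hlin x hc, ← hgdc, sub_self]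

end RightKernelLinear

theorem statement11_general {k D : Type*} [CommRing k] [Ring D] [Algebra k D] (h : ℕ)
    (g : Module.End k D)
    (hgh : g ^ h = 0)
    (x : D) (hq : IsUnit ((g ^ (h - 1)) x))
    (hlin : ∀ a b : D, g b = 0 → g (a * b) = g a * b) :
    ∀ d : D, ∃! c : Fin h → D,
      (∀ i, g (c i) = 0) ∧ d = ∑ i : Fin h, (g ^ (i : ℕ)) x * c i := by
  intro d
  have hvanish : ∀ y : D, (g ^ h) y = 0 := fun y => by rw [hgh, LinearMap.zero_apply]
  cases h with
  | zero => exact ⟨finZeroElim, ⟨finZeroElim, by simpa using hvanish d⟩,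
      fun _ _ => funext finZeroElim⟩
  | succ n =>
    obtain ⟨c, hc, hdc⟩ := exists_sum_pow_mul_eq hlin (hvanish x) hq (hvanish d)
    refine ⟨c, ⟨hc, hdc⟩, fun c' ⟨hc', hdc'⟩ => ?_⟩
    rw [← sub_eq_zero]
    refine eq_zero_of_sum_pow_mul_eq_zero hlin (hvanish x) hq
      (fun i => by simp [hc i, hc' i]) ?_
    simp only [Pi.sub_apply, mul_sub, sum_sub_distrib, ← hdc, ← hdc', sub_self]

/-- Let `g : D → D` be `k`-linear with `g(1) = 0`, `g^h = 0`, and `q := g^{h-1}(x)`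
invertible for some `x`. If `E := ker g` is a `k`-subalgebra and `g` is right
`E`-linear, then `D` is a free right `E`-module of rank `h` with basis
`{x, g(x), …, g^{h-1}(x)}`, i.e. every `d ∈ D` has a unique expression
`d = Σ_{i<h} g^i(x)·λᵢ` with all `λᵢ ∈ E`. -/
theorem statement11 {k D : Type*} [CommRing k] [Ring D] [Algebra k D] (h : ℕ)
    (hh : 0 < h) (g : Module.End k D)
    (hg1 : g 1 = 0)
    (hgh : g ^ h = 0)
    (x : D) (hq : IsUnit ((g ^ (h - 1)) x))
    (hEmul : ∀ a b : D, g a = 0 → g b = 0 → g (a * b) = 0)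
    (hlin : ∀ a b : D, g b = 0 → g (a * b) = g a * b) :
    ∀ d : D, ∃! c : Fin h → D,
      (∀ i, g (c i) = 0) ∧ d = ∑ i : Fin h, (g ^ (i : ℕ)) x * c i :=
  statement11_general h g hgh x hq hlin
end

section
/- Let s : C⊗A → A⊗C be a twisting map with C = k[y]/⟨y^n⟩ satisfying: there exist h with 1 < h ≤ n and x ∈ A such that γ^h_0 = 0 and q := γ^{h-1}_0(x) is right cancelable, and γ^1_0 is a B-bimodule endomorphism where B := ker γ^1_0. Then for each b ∈ B the h×h submatrix M_{(h)}(b) := (γ^i_j(b))_{0≤i,j<h} equals b·I_h; that is, γ^i_i(b) = b and γ^i_j(b) = 0 for i ≠ j, 0 ≤ i,j < h. -/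
/-!
Write `φ = γ^1_0`. The Composition law gives `γ^i_0 = φ^i`, so `q = φ^{h-1}(x)` lies in `B` and
`φ^t(x) = 0` for `t ≥ h`. The Product law makes `φ` right `B`-linear, and cancelling `q` in
`φ(b a) q = φ(b a q) = b φ(a) q` makes it left `B`-linear. Applying `φ(b ·) = b φ(·)` to
`φ^{h-1-j}(x)` gives a triangular system for the row `γ^1_j(b)`, solved by cancelling `q`;
the Composition law then propagates the first row to all of `M_{(h)}(b)`.
-/

/-- The conditions on a family `γ^r_j` of `k`-linear endomorphisms of `A` that are
equivalent to the associated map `s(y^r ⊗ a) = Σ_j γ^r_j(a) ⊗ y^j` being a twisting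
map `k[y]/⟨y^n⟩ ⊗ A → A ⊗ k[y]/⟨y^n⟩`: vanishing for `r ≥ n`, `γ^0_j = δ_{0j}·id`,
`γ^1_j(1) = δ_{1j}`, the Product law for `γ^1_j`, and the recursive Composition
law. -/
def IsTwistingFamily (k A : Type*) [CommRing k] [Ring A] [Algebra k A] (n : ℕ)
    (γ : ℕ → ℕ → Module.End k A) : Prop :=
  (∀ r j, n ≤ r → j < n → γ r j = 0) ∧
  (∀ j < n, γ 0 j = if j = 0 then 1 else 0) ∧
  (∀ j < n, γ 1 j 1 = if j = 1 then 1 else 0) ∧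
  (∀ j < n, ∀ a b : A,
    γ 1 j (a * b) = ∑ i ∈ Finset.range n, γ 1 i a * γ i j b) ∧
  (∀ r j, 1 < r → j < n →
    γ r j = ∑ l ∈ Finset.range (j + 1), γ 1 l * γ (r - 1) (j - l))

open Finset

theorem eq_ite_of_mul_succ_eq_sum {A : Type*} [Ring A] {n h : ℕ} (hhn : h ≤ n) (b : A)
    (c p : ℕ → A) (hc0 : c 0 = 0) (hp : ∀ t, h ≤ t → p t = 0)
    (hcancel : ∀ a a' : A, a * p (h - 1) = a' * p (h - 1) → a = a')
    (hsum : ∀ m, b * p (m + 1) = ∑ i ∈ range n, c i * p (i + m)) :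
    ∀ j < h, c j = if j = 1 then b else 0 := by
  intro j
  induction j using Nat.strong_induction_on with
  | _ j ih =>
  intro hjh
  rcases Nat.eq_zero_or_pos j with rfl | hj
  · simpa using hc0
  have hsplit : ∑ i ∈ range n, c i * p (i + (h - 1 - j)) =
      ∑ i ∈ range j, c i * p (i + (h - 1 - j)) + c j * p (h - 1) := by
    rw [← sum_range_add_sum_Ico _ (show j + 1 ≤ n by omega), sum_range_succ,
      sum_eq_zero (s := Ico (j + 1) n), add_zero, show j + (h - 1 - j) = h - 1 by omega]
    intro i hi
    rw [hp _ (by simp only [mem_Ico] at hi; omega), mul_zero]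
  have hlower : ∑ i ∈ range j, c i * p (i + (h - 1 - j)) =
      if 1 < j then b * p (h - j) else 0 := by
    rw [sum_congr rfl fun i hi => by
      have := mem_range.1 hi
      rw [ih i this (by omega)]]
    simp only [ite_mul, zero_mul, sum_ite_eq', mem_range]
    split_ifs with hj1
    · rw [show 1 + (h - 1 - j) = h - j by omega]
    · rfl
  have key := hsum (h - 1 - j)
  rw [hsplit, hlower, show h - 1 - j + 1 = h - j by omega] at key
  apply hcancel
  by_cases hj1 : j = 1
  · subst hj1
    rw [if_neg (lt_irrefl 1), zero_add] at key
    rw [if_pos rfl]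
    exact key.symm
  · rw [if_pos (by omega), left_eq_add] at key
    rw [if_neg hj1, key, zero_mul]

namespace IsTwistingFamily

variable {k A : Type*} [CommRing k] [Ring A] [Algebra k A] {n : ℕ}
  {γ : ℕ → ℕ → Module.End k A}

theorem gamma_zero_eq_pow (hγ : IsTwistingFamily k A n γ) (hn : 0 < n) (i : ℕ) :
    γ i 0 = γ 1 0 ^ i := by
  induction i with
  | zero => simpa using hγ.2.1 0 hn
  | succ i ih =>
    rcases Nat.eq_zero_or_pos i with rfl | hi
    · rw [pow_one]
    · rw [hγ.2.2.2.2 (i + 1) 0 (by omega) hn, sum_range_one, Nat.add_sub_cancel, ih, pow_succ']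

theorem gamma_one_zero_mul (hγ : IsTwistingFamily k A n γ) (hn : 0 < n) (a c : A) :
    γ 1 0 (a * c) = ∑ i ∈ range n, γ 1 i a * (γ 1 0 ^ i) c := by
  rw [hγ.2.2.2.1 0 hn a c]
  exact sum_congr rfl fun i _ => by rw [hγ.gamma_zero_eq_pow hn i]

theorem gamma_one_zero_mul_of_apply_eq_zero (hγ : IsTwistingFamily k A n γ) (hn : 0 < n)
    {c : A} (hc : γ 1 0 c = 0) (a : A) : γ 1 0 (a * c) = γ 1 0 a * c := by
  rw [hγ.gamma_one_zero_mul hn, sum_eq_single_of_mem 0 (mem_range.2 hn), pow_zero,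
    Module.End.one_apply]
  intro i _ hi
  obtain ⟨m, rfl⟩ := Nat.exists_eq_succ_of_ne_zero hi
  rw [pow_succ, Module.End.mul_apply, hc, map_zero, mul_zero]

theorem gamma_one_zero_mul_left (hγ : IsTwistingFamily k A n γ) (hn : 0 < n) {q b : A}
    (hqB : γ 1 0 q = 0) (hq : ∀ a a' : A, a * q = a' * q → a = a')
    (hbimod : ∀ a, γ 1 0 (b * a * q) = b * γ 1 0 a * q) (a : A) :
    γ 1 0 (b * a) = b * γ 1 0 a :=
  hq _ _ (by rw [← hγ.gamma_one_zero_mul_of_apply_eq_zero hn hqB, hbimod])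

theorem gamma_apply_eq_ite_of_row_one (hγ : IsTwistingFamily k A n γ) {h : ℕ} (hhn : h ≤ n)
    {b : A} (hrow : ∀ j < h, γ 1 j b = if j = 1 then b else 0) :
    ∀ i, ∀ j < h, γ i j b = if i = j then b else 0 := by
  intro i
  induction i with
  | zero =>
    intro j hj
    rw [hγ.2.1 j (by omega)]
    rcases eq_or_ne j 0 with rfl | hj0
    · simp
    · rw [if_neg hj0, if_neg hj0.symm, LinearMap.zero_apply]
  | succ i ih =>
    intro j hj
    rcases Nat.eq_zero_or_pos i with rfl | hi
    · rw [zero_add, hrow j hj]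
      exact if_congr eq_comm rfl rfl
    rw [hγ.2.2.2.2 (i + 1) j (by omega) (by omega), LinearMap.sum_apply, Nat.add_sub_cancel]
    simp only [Module.End.mul_apply]
    rw [sum_congr rfl fun l hl => by
      rw [ih (j - l) (by omega), apply_ite (γ 1 l), map_zero]]
    rw [sum_ite (p := fun l => i = j - l), sum_const_zero, add_zero]
    rcases Nat.lt_or_ge j i with hji | hij
    · rw [filter_false_of_mem fun l hl => by simp only [mem_range] at hl; omega, sum_empty,
        if_neg (by omega)]
    · rw [filter_congr (q := fun l => l = j - i) fun l hl => by
          simp only [mem_range] at hl; omega,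
        filter_eq' (range (j + 1)) (j - i), if_pos (mem_range.2 (by omega)), sum_singleton,
        hrow (j - i) (by omega)]
      exact if_congr (by omega) rfl rfl

end IsTwistingFamily

/-- Let `s` be a twisting map (structure maps `γ^r_j`) with `γ^h_0 = 0` for some
`1 < h ≤ n`, `q := γ^{h-1}_0(x)` right cancelable, and `γ^1_0` a `B`-bimodule map
where `B := ker γ^1_0`. Then for each `b ∈ B` the submatrix
`M_{(h)}(b) = (γ^i_j(b))_{i,j<h}` equals `b·I_h`. -/
theorem statement12 {k A : Type*} [CommRing k] [Ring A] [Algebra k A] (n h : ℕ)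
    (γ : ℕ → ℕ → Module.End k A)
    (hγ : IsTwistingFamily k A n γ)
    (hh1 : 1 < h) (hhn : h ≤ n) (x : A)
    (hγh : γ h 0 = 0)
    (hq : ∀ a a' : A, a * γ (h - 1) 0 x = a' * γ (h - 1) 0 x → a = a')
    (hbimod : ∀ (a b b' : A), γ 1 0 b = 0 → γ 1 0 b' = 0 →
      γ 1 0 (b * a * b') = b * γ 1 0 a * b') :
    ∀ b : A, γ 1 0 b = 0 → ∀ i < h, ∀ j < h,
      γ i j b = if i = j then b else 0 := by
  intro b hb i _
  have hn : 0 < n := by omega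
  have hpow := hγ.gamma_zero_eq_pow hn
  have hvanish : ∀ t, h ≤ t → (γ 1 0 ^ t) x = 0 := fun t ht => by
    rw [← Nat.sub_add_cancel ht, pow_add, Module.End.mul_apply, ← hpow h, hγh,
      LinearMap.zero_apply, map_zero]
  have hqB : γ 1 0 ((γ 1 0 ^ (h - 1)) x) = 0 := by
    rw [← Module.End.mul_apply, ← pow_succ', Nat.sub_add_cancel (by omega), hvanish h le_rfl]
  rw [hpow] at hq
  have hleft := hγ.gamma_one_zero_mul_left hn hqB hq fun a => hbimod a b _ hb hqB
  have hexpand : ∀ m, b * (γ 1 0 ^ (m + 1)) x =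
      ∑ i ∈ range n, γ 1 i b * (γ 1 0 ^ (i + m)) x := fun m => by
    rw [pow_succ', Module.End.mul_apply, ← hleft, hγ.gamma_one_zero_mul hn]
    simp only [pow_add, Module.End.mul_apply]
  exact hγ.gamma_apply_eq_ite_of_row_one hhn (eq_ite_of_mul_succ_eq_sum hhn b
    (fun j => γ 1 j b) (fun t => (γ 1 0 ^ t) x) hb hvanish hq hexpand) i
end

section
/- Under the same hypotheses, for each b ∈ B the full matrix M(b) = (γ^i_j(b))_{0≤i,j<n} is upper triangular: γ^i_j(b) = 0 whenever i > j. -/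
/-!
Write `g = γ^1_0`. The composition law makes `γ^r_0 = g^r`, and the product law then gives
`g^r (c * d) = ∑_i γ^r_i(c) * g^i(d)`. Since `g^h = 0`, taking `d = g^(h-1-q)(x)` and
cancelling `g^(h-1)(x)` on the right isolates `γ^r_q(c)` once the entries left of column `q`
vanish: this kills the columns `q < h` of every row `r ≥ h` and, for `b ∈ B` (where `g` commutes
with left multiplication by `b`), the entries `γ^r_q(b)` with `q < h`, `q < r`. The remaining
columns `j ≥ h` follow by induction on `j` from `γ^r = γ^h · γ^(r-h)`.
-/

open Finset Polynomial

theorem Finset.sum_range_sum_range_eq_sum_range_diag {M : Type*} [AddCommMonoid M] (n : ℕ)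
    (F : ℕ → ℕ → M) (hF : ∀ p q, p < n → q < n → n ≤ p + q → F p q = 0) :
    ∑ p ∈ range n, ∑ q ∈ range n, F p q = ∑ t ∈ range n, ∑ l ∈ range (t + 1), F l (t - l) := by
  rw [sum_range_diag_flip]
  refine sum_congr rfl fun p hp => (sum_subset (fun q hq => ?_) fun q hq hq' => ?_).symm
  · simp only [mem_range] at hp hq ⊢
    omega
  · simp only [mem_range] at hp hq hq'
    exact hF p q hp hq (by omega)

namespace IsTwistingFamily

variable {k A : Type*} [CommRing k] [Ring A] [Algebra k A] {n : ℕ}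
  {γ : ℕ → ℕ → Module.End k A}

/-- The rows `(γ^r_j)_{j<n}` are the truncations of the powers of this polynomial, which
turns the recursive composition law into associativity of multiplication. -/
noncomputable def rowPoly (n : ℕ) (γ : ℕ → ℕ → Module.End k A) : (Module.End k A)[X] :=
  ∑ j ∈ range n, C (γ 1 j) * X ^ j

theorem coeff_rowPoly {j : ℕ} (hj : j < n) : (rowPoly n γ).coeff j = γ 1 j := by
  simp [rowPoly, coeff_C_mul, coeff_X_pow, hj]

theorem coeff_rowPoly_pow (hγ : IsTwistingFamily k A n γ) {r j : ℕ} (hr : 1 ≤ r) (hj : j < n) :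
    (rowPoly n γ ^ r).coeff j = γ r j := by
  induction r, hr using Nat.le_induction generalizing j with
  | base => rw [pow_one, coeff_rowPoly hj]
  | succ r hr ih =>
    rw [pow_succ', coeff_mul, Nat.sum_antidiagonal_eq_sum_range_succ_mk,
      hγ.2.2.2.2 (r + 1) j (by omega) hj, Nat.add_sub_cancel]
    refine sum_congr rfl fun l hl => ?_
    have := mem_range.mp hl
    rw [coeff_rowPoly (by omega), ih (by omega)]

theorem apply_add (hγ : IsTwistingFamily k A n γ) {a c j : ℕ} (ha : 1 ≤ a) (hc : 1 ≤ c)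
    (hj : j < n) : γ (a + c) j = ∑ l ∈ range (j + 1), γ a l * γ c (j - l) := by
  rw [← hγ.coeff_rowPoly_pow (by omega) hj, pow_add, coeff_mul,
    Nat.sum_antidiagonal_eq_sum_range_succ_mk]
  refine sum_congr rfl fun l hl => ?_
  have := mem_range.mp hl
  rw [hγ.coeff_rowPoly_pow ha (by omega), hγ.coeff_rowPoly_pow hc (by omega)]

theorem col_zero_eq_pow (hγ : IsTwistingFamily k A n γ) (hn : 0 < n) :
    ∀ r, γ r 0 = γ 1 0 ^ r
  | 0 => by rw [hγ.2.1 0 hn, if_pos rfl, pow_zero]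
  | 1 => (pow_one _).symm
  | r + 2 => by
    rw [hγ.2.2.2.2 (r + 2) 0 (by omega) hn, sum_range_one, Nat.sub_zero, show r + 2 - 1 = r + 1 from rfl,
      hγ.col_zero_eq_pow hn (r + 1), ← pow_succ']

theorem pow_eq_zero_of_le (hγ : IsTwistingFamily k A n γ) (hn : 0 < n) {t : ℕ} (ht : n ≤ t) :
    γ 1 0 ^ t = 0 := by
  rw [← hγ.col_zero_eq_pow hn]
  exact hγ.1 t 0 ht hn

theorem pow_apply_mul (hγ : IsTwistingFamily k A n γ) (hn : 0 < n) {r : ℕ} (hr : 1 ≤ r)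
    (c d : A) : (γ 1 0 ^ r) (c * d) = ∑ i ∈ range n, γ r i c * (γ 1 0 ^ i) d := by
  have hprod (c d : A) : γ 1 0 (c * d) = ∑ i ∈ range n, γ 1 i c * (γ 1 0 ^ i) d := by
    rw [hγ.2.2.2.1 0 hn]
    exact sum_congr rfl fun i _ => by rw [hγ.col_zero_eq_pow hn i]
  induction r, hr using Nat.le_induction generalizing c with
  | base => rw [pow_one, hprod]
  | succ r hr ih =>
    calc (γ 1 0 ^ (r + 1)) (c * d)
        = ∑ i ∈ range n, ∑ p ∈ range n, γ 1 p (γ r i c) * (γ 1 0 ^ (p + i)) d := by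
          rw [pow_succ', Module.End.mul_apply, ih, map_sum]
          simp only [hprod, pow_add, Module.End.mul_apply]
      _ = ∑ p ∈ range n, ∑ i ∈ range n, γ 1 p (γ r i c) * (γ 1 0 ^ (p + i)) d := sum_comm
      _ = ∑ t ∈ range n, ∑ l ∈ range (t + 1),
            γ 1 l (γ r (t - l) c) * (γ 1 0 ^ (l + (t - l))) d :=
          sum_range_sum_range_eq_sum_range_diag n _ fun p i _ _ hpi => by
            rw [hγ.pow_eq_zero_of_le hn hpi, LinearMap.zero_apply, mul_zero]
      _ = ∑ t ∈ range n, γ (r + 1) t c * (γ 1 0 ^ t) d := by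
          refine sum_congr rfl fun t ht => ?_
          rw [hγ.2.2.2.2 (r + 1) t (by omega) (mem_range.mp ht), Nat.add_sub_cancel,
            LinearMap.sum_apply, sum_mul]
          refine sum_congr rfl fun l hl => ?_
          rw [Nat.add_sub_cancel' (Nat.lt_succ_iff.mp (mem_range.mp hl)), Module.End.mul_apply]

theorem apply_eq_zero_of_pow_apply_mul_eq_zero (hγ : IsTwistingFamily k A n γ) {r q : ℕ}
    (hr : 1 ≤ r) (hq : q < n) {c y : A} (hy : (γ 1 0 ^ (q + 1)) y = 0)
    (hcancel : ∀ a : A, a * (γ 1 0 ^ q) y = 0 → a = 0) (hlow : ∀ i < q, γ r i c = 0)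
    (hcy : (γ 1 0 ^ r) (c * y) = 0) : γ r q c = 0 := by
  apply hcancel
  rw [← hcy, hγ.pow_apply_mul (by omega) hr, sum_eq_single q _ fun h => absurd (mem_range.mpr hq) h]
  intro i _ hiq
  rcases hiq.lt_or_gt with hi | hi
  · rw [hlow i hi, zero_mul]
  · rw [Module.End.pow_map_zero_of_le hi hy, mul_zero]

theorem eq_zero_of_lt_of_le (hγ : IsTwistingFamily k A n γ) {h : ℕ} (hhn : h ≤ n)
    (hgh : γ 1 0 ^ h = 0) {x : A} (hx : ∀ a : A, a * (γ 1 0 ^ (h - 1)) x = 0 → a = 0)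
    {q r : ℕ} (hq : q < h) (hr : h ≤ r) : γ r q = 0 := by
  induction q using Nat.strong_induction_on with
  | _ q ih =>
  ext c
  refine hγ.apply_eq_zero_of_pow_apply_mul_eq_zero (y := (γ 1 0 ^ (h - 1 - q)) x) (by omega)
    (by omega) ?_ ?_ (fun i hi => by rw [ih i hi (by omega), LinearMap.zero_apply]) ?_
  · rw [← Module.End.mul_apply, ← pow_add, show q + 1 + (h - 1 - q) = h by omega, hgh,
      LinearMap.zero_apply]
  · rwa [← Module.End.mul_apply, ← pow_add, show q + (h - 1 - q) = h - 1 by omega]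
  · rw [show r = r - h + h by omega, pow_add, hgh, mul_zero, LinearMap.zero_apply]

theorem apply_eq_zero_of_commute_of_lt_of_lt (hγ : IsTwistingFamily k A n γ) {h : ℕ}
    (hhn : h ≤ n) (hgh : γ 1 0 ^ h = 0) {x : A}
    (hx : ∀ a : A, a * (γ 1 0 ^ (h - 1)) x = 0 → a = 0) {b : A}
    (hb : Commute (γ 1 0) (LinearMap.mulLeft k b)) {q r : ℕ} (hq : q < h) (hqr : q < r) :
    γ r q b = 0 := by
  induction q using Nat.strong_induction_on with
  | _ q ih =>
  have hpow (t : ℕ) (a : A) : (γ 1 0 ^ t) (b * a) = b * (γ 1 0 ^ t) a :=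
    LinearMap.congr_fun ((hb.pow_left t).eq) a
  refine hγ.apply_eq_zero_of_pow_apply_mul_eq_zero (y := (γ 1 0 ^ (h - 1 - q)) x) (by omega)
    (by omega) ?_ ?_ (fun i hi => ih i hi (by omega) (by omega)) ?_
  · rw [← Module.End.mul_apply, ← pow_add, show q + 1 + (h - 1 - q) = h by omega, hgh,
      LinearMap.zero_apply]
  · rwa [← Module.End.mul_apply, ← pow_add, show q + (h - 1 - q) = h - 1 by omega]
  · rw [hpow, ← Module.End.mul_apply, ← pow_add,
      Module.End.pow_map_zero_of_le (show h ≤ r + (h - 1 - q) by omega) (by rw [hgh]; rfl),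
      mul_zero]

theorem apply_eq_zero_of_commute_of_lt (hγ : IsTwistingFamily k A n γ) {h : ℕ} (hh : 0 < h)
    (hhn : h ≤ n) (hgh : γ 1 0 ^ h = 0) {x : A}
    (hx : ∀ a : A, a * (γ 1 0 ^ (h - 1)) x = 0 → a = 0) {b : A}
    (hb : Commute (γ 1 0) (LinearMap.mulLeft k b)) {j r : ℕ} (hj : j < n) (hjr : j < r) :
    γ r j b = 0 := by
  induction j using Nat.strong_induction_on generalizing r with
  | _ j ih =>
  rcases lt_or_ge j h with hjh | hjh
  · exact hγ.apply_eq_zero_of_commute_of_lt_of_lt hhn hgh hx hb hjh hjr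
  rw [show r = h + (r - h) by omega, hγ.apply_add hh (by omega) hj, LinearMap.sum_apply]
  refine sum_eq_zero fun l hl => ?_
  have := mem_range.mp hl
  rcases lt_or_ge l h with hlh | hlh
  · rw [Module.End.mul_apply, hγ.eq_zero_of_lt_of_le hhn hgh hx hlh le_rfl, LinearMap.zero_apply]
  · rw [Module.End.mul_apply, ih (j - l) (by omega) (by omega) (by omega), map_zero]

end IsTwistingFamily

/-- Under the same hypotheses, for each `b ∈ B = ker γ^1_0` the matrix
`M(b) = (γ^i_j(b))_{i,j<n}` is upper triangular: `γ^i_j(b) = 0` whenever `i > j`. -/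
theorem statement14 {k A : Type*} [CommRing k] [Ring A] [Algebra k A] (n h : ℕ)
    (γ : ℕ → ℕ → Module.End k A)
    (hγ : IsTwistingFamily k A n γ)
    (hh1 : 1 < h) (hhn : h ≤ n) (x : A)
    (hγh : γ h 0 = 0)
    (hq : ∀ a a' : A, a * γ (h - 1) 0 x = a' * γ (h - 1) 0 x → a = a')
    (hbimod : ∀ (a b b' : A), γ 1 0 b = 0 → γ 1 0 b' = 0 →
      γ 1 0 (b * a * b') = b * γ 1 0 a * b') :
    ∀ b : A, γ 1 0 b = 0 → ∀ i < n, ∀ j < n, j < i → γ i j b = 0 := by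
  intro b hb i _ j hj hji
  have hpow := hγ.col_zero_eq_pow (by omega)
  have hgh : γ 1 0 ^ h = 0 := by rw [← hpow, hγh]
  have hx (a : A) (ha : a * (γ 1 0 ^ (h - 1)) x = 0) : a = 0 :=
    hq a 0 (by rw [hpow, ha, zero_mul])
  have hone : γ 1 0 1 = 0 := by simpa using hγ.2.2.1 0 (by omega)
  have hcomm : Commute (γ 1 0) (LinearMap.mulLeft k b) :=
    LinearMap.ext fun a => by simpa using hbimod a b 1 hb hone
  exact hγ.apply_eq_zero_of_commute_of_lt (by omega) hhn hgh hx hcomm hj hji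
end

section
/- Let s : C⊗A → A⊗C be a twisting map with C = k[y]/⟨y^n⟩ such that γ^1_j = δ_{1j}·id for all j < j_0 (where 2 ≤ j_0 < n). Then for all i < n: (1) γ^i_l = 0 for l < i and γ^i_i = id; (2) γ^i_{i+l} = 0 for 0 < l < min(j_0 - 1, n - i); (3) γ^i_{i+j_0-1} = i·γ^1_{j_0} for i ≤ n - j_0. -/
/-!
Put `F = ∑ₐ γ¹ₐ Xᵃ` with a central variable `X`, so that `γʳⱼ` is the coefficient of `Xʲ` in
`Fʳ`. The hypothesis says `F = X + γ¹_{j₀} X^{j₀} + O(X^{j₀+1})`, hence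
`Fʳ = Xʳ + r γ¹_{j₀} X^{r+j₀-1} + O(X^{r+j₀})`; coefficientwise this follows by induction on `r`
from `F^{r+1} = F · Fʳ`. All three claims are read off this formula.
-/

open Finset

theorem Finset.Nat.sum_antidiagonalTuple_succ {M : Type*} [AddCommMonoid M] (k n : ℕ)
    (g : (Fin (k + 1) → ℕ) → M) :
    ∑ u ∈ antidiagonalTuple (k + 1) n, g u =
      ∑ p ∈ antidiagonal n, ∑ v ∈ antidiagonalTuple k p.2, g (Fin.cons p.1 v) := by
  change (Multiset.map g (List.Nat.antidiagonalTuple (k + 1) n : Multiset (Fin (k + 1) → ℕ))).sum =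
    (Multiset.map _ (List.Nat.antidiagonal n : Multiset (ℕ × ℕ))).sum
  simp only [List.Nat.antidiagonalTuple, Multiset.map_coe, Multiset.sum_coe, List.flatMap,
    List.map_flatten, List.sum_flatten, List.map_map]
  refine congrArg List.sum (List.map_congr_left fun p _ => ?_)
  change _ = (Multiset.map _ (List.Nat.antidiagonalTuple k p.2 : Multiset (Fin k → ℕ))).sum
  simp only [Multiset.map_coe, Multiset.sum_coe, Function.comp_apply, List.map_map]
  rfl

section ConvPow

variable {M : Type*} [Semiring M]

/-- The coefficient of `Xʲ` in `(∑ₐ f a Xᵃ)ʳ` for a central variable `X`. -/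
def convPow (f : ℕ → M) (r j : ℕ) : M :=
  ∑ u ∈ Nat.antidiagonalTuple r j, (List.ofFn fun i : Fin r => f (u i)).prod

theorem convPow_zero (f : ℕ → M) (j : ℕ) : convPow f 0 j = if j = 0 then 1 else 0 := by
  cases j <;> simp [convPow]

theorem convPow_succ (f : ℕ → M) (r j : ℕ) :
    convPow f (r + 1) j = ∑ p ∈ antidiagonal j, f p.1 * convPow f r p.2 := by
  simp [convPow, Nat.sum_antidiagonalTuple_succ, List.ofFn_succ, Finset.mul_sum]

theorem convPow_eq_of_lt {f : ℕ → M} {j0 : ℕ} (hj0 : 2 ≤ j0)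
    (hf : ∀ a < j0, f a = if a = 1 then 1 else 0) (r l : ℕ) (hl : l < r + j0) :
    convPow f r l = (if l = r then 1 else 0) + if l = r + (j0 - 1) then r • f j0 else 0 := by
  induction r generalizing l with
  | zero => rw [convPow_zero]; split_ifs <;> simp_all
  | succ r ih =>
    have summand : ∀ p ∈ antidiagonal l, f p.1 * convPow f r p.2 =
        (if p = (1, l - 1) then convPow f r (l - 1) else 0) +
          if p = (j0, r) then f j0 else 0 := by
      rintro ⟨a, b⟩ hab
      rw [HasAntidiagonal.mem_antidiagonal] at hab
      simp only [Prod.ext_iff]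
      rcases lt_trichotomy a j0 with ha | rfl | ha
      · rw [hf a ha]
        split_ifs <;> first | omega | simp_all
      · rw [ih b (by omega)]
        split_ifs <;> first | omega | simp_all
      · rw [ih b (by omega)]
        split_ifs <;> first | omega | simp_all
    rw [convPow_succ, sum_congr rfl summand, sum_add_distrib, sum_ite_eq', sum_ite_eq']
    simp only [HasAntidiagonal.mem_antidiagonal, ih (l - 1) (by omega)]
    split_ifs <;> first | omega | simp [add_one_mul]

end ConvPow

/-- Let `γ^r_j` be the structure maps of a twisting map (so `γ^0_j = δ_{0j}·id` and
`γ^r_j = Σ_{u_1+⋯+u_r=j} γ^1_{u_1}∘⋯∘γ^1_{u_r}` for `r ≥ 1`). If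
`γ^1_j = δ_{1j}·id` for all `j < j₀` (with `2 ≤ j₀ < n`), then for all `i < n`:
(1) `γ^i_l = 0` for `l < i` and `γ^i_i = id`;
(2) `γ^i_{i+l} = 0` for `0 < l < min (j₀-1) (n-i)`;
(3) `γ^i_{i+j₀-1} = i·γ^1_{j₀}` for `i ≤ n - j₀`. -/
theorem statement15 {k A : Type*} [CommRing k] [Ring A] [Algebra k A] (n j0 : ℕ)
    (γ : ℕ → ℕ → Module.End k A)
    (hγ0 : ∀ j < n, γ 0 j = if j = 0 then 1 else 0)
    (hform : ∀ r j, 1 ≤ r → j < n →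
      γ r j = ∑ u ∈ Finset.Nat.antidiagonalTuple r j,
        (List.ofFn fun i : Fin r => γ 1 (u i)).prod)
    (hj0 : 2 ≤ j0) (hj0n : j0 < n)
    (hδ : ∀ j < j0, γ 1 j = if j = 1 then 1 else 0) :
    ∀ i < n,
      ((∀ l < i, γ i l = 0) ∧ γ i i = 1) ∧
      (∀ l, 0 < l → l < min (j0 - 1) (n - i) → γ i (i + l) = 0) ∧
      (i ≤ n - j0 → γ i (i + j0 - 1) = i • γ 1 j0) := by
  intro i hi
  have hγ : ∀ l < n, γ i l = convPow (γ 1) i l := fun l hl => by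
    rcases Nat.eq_zero_or_pos i with rfl | hi0
    · rw [hγ0 l hl, convPow_zero]
    · exact hform i l hi0 hl
  have hcoeff : ∀ l < n, l < i + j0 → γ i l =
      (if l = i then 1 else 0) + if l = i + (j0 - 1) then i • γ 1 j0 else 0 :=
    fun l hl hl' => (hγ l hl).trans (convPow_eq_of_lt hj0 hδ i l hl')
  refine ⟨⟨fun l hl => ?_, ?_⟩, fun l hl0 hl => ?_, fun hin => ?_⟩ <;>
    rw [hcoeff _ (by omega) (by omega)] <;> split_ifs <;> first | omega | simp
end

section
/- With the setup of the previous statement, there exists an upper triangular twisting map s_{n+1} : C_{n+1}⊗A → A⊗C_{n+1} having the same maps γ^1_j for j = 0,…,n−1 as s_n if and only if there is a k-linear map γ^1_n : A → A with γ^1_n(1) = 0 satisfying γ^1_n(ab) = α(a)γ^1_n(b) + γ^1_n(a)α^n(b) + F(a⊗b), i.e. if and only if the Hochschild cohomology class [F] vanishes in H^2(A, _αA_{α^n}). -/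
/-- The maps `γ^i_n := Σ_{u_1+⋯+u_i=n, u_j ≥ 1} γ^1_{u_1}∘⋯∘γ^1_{u_i}`. -/
noncomputable def gammaN {k A : Type*} [CommRing k] [Ring A] [Algebra k A]
    (n : ℕ) (γ : ℕ → ℕ → Module.End k A) (i : ℕ) : Module.End k A :=
  ∑ u ∈ (Finset.Nat.antidiagonalTuple i n).filter (fun u => ∀ t, 1 ≤ u t),
    (List.ofFn fun t : Fin i => γ 1 (u t)).prod

/-- The obstruction cochain `F(a ⊗ b) := Σ_{i=2}^{n-1} γ^1_i(a)·γ^i_n(b)`. -/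
noncomputable def Fcocycle {k A : Type*} [CommRing k] [Ring A] [Algebra k A]
    (n : ℕ) (γ : ℕ → ℕ → Module.End k A) (a b : A) : A :=
  ∑ i ∈ Finset.Ico 2 n, γ 1 i a * gammaN n γ i b
open Finset

def positiveCompositions (i j : ℕ) : Finset (Fin i → ℕ) :=
  (Nat.antidiagonalTuple i j).filter fun u => ∀ t, 1 ≤ u t

theorem mem_positiveCompositions {i j : ℕ} {u : Fin i → ℕ} :
    u ∈ positiveCompositions i j ↔ ∑ t, u t = j ∧ ∀ t, 1 ≤ u t := by
  rw [positiveCompositions, mem_filter, Nat.mem_antidiagonalTuple]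

theorem add_le_of_mem_positiveCompositions {i j : ℕ} {u : Fin i → ℕ}
    (hu : u ∈ positiveCompositions i j) (t : Fin i) : u t + (i - 1) ≤ j := by
  classical
  obtain ⟨hsum, hpos⟩ := mem_positiveCompositions.1 hu
  have hrest : (univ.erase t).card • 1 ≤ ∑ s ∈ univ.erase t, u s :=
    card_nsmul_le_sum _ _ _ fun s _ => hpos s
  rw [card_erase_of_mem (mem_univ t), card_univ, Fintype.card_fin, smul_eq_mul, mul_one] at hrest
  have := add_sum_erase univ u (mem_univ t)
  omega

theorem positiveCompositions_eq_empty_of_lt {i j : ℕ} (h : j < i) :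
    positiveCompositions i j = ∅ := by
  refine eq_empty_of_forall_notMem fun u hu => ?_
  have := add_le_of_mem_positiveCompositions hu ⟨0, by omega⟩
  have := (mem_positiveCompositions.1 hu).2 ⟨0, by omega⟩
  omega

theorem positiveCompositions_self (i : ℕ) : positiveCompositions i i = {fun _ => 1} := by
  ext u
  rw [mem_positiveCompositions, mem_singleton]
  constructor
  · intro hu
    funext t
    have := add_le_of_mem_positiveCompositions (mem_positiveCompositions.2 hu) t
    have := hu.2 t
    have := t.pos
    omega
  · rintro rfl
    simp

theorem positiveCompositions_one (j : ℕ) :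
    positiveCompositions 1 j = if j = 0 then ∅ else {![j]} := by
  rw [positiveCompositions, Nat.antidiagonalTuple_one, filter_singleton]
  split_ifs <;> simp_all [Nat.one_le_iff_ne_zero]

theorem sum_positiveCompositions_succ {M : Type*} [AddCommMonoid M] (i j : ℕ)
    (f : (Fin (i + 1) → ℕ) → M) :
    ∑ u ∈ positiveCompositions (i + 1) j, f u =
      ∑ l ∈ range j, ∑ v ∈ positiveCompositions i (j - (l + 1)), f (Fin.cons (l + 1) v) := by
  rw [sum_sigma']
  refine sum_nbij' (fun u => ⟨u 0 - 1, Fin.tail u⟩) (fun p => Fin.cons (p.1 + 1) p.2)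
    ?_ ?_ ?_ ?_ ?_
  · intro u hu
    obtain ⟨hsum, hpos⟩ := mem_positiveCompositions.1 hu
    rw [Fin.sum_univ_succ] at hsum
    have := hpos 0
    simp only [mem_sigma, mem_range, mem_positiveCompositions, Fin.tail]
    exact ⟨by omega, by omega, fun t => hpos t.succ⟩
  · rintro ⟨l, v⟩ hp
    simp only [mem_sigma, mem_range, mem_positiveCompositions] at hp
    simp only [mem_positiveCompositions, Fin.sum_univ_succ, Fin.cons_zero,
      Fin.cons_succ, Fin.forall_fin_succ]
    exact ⟨by omega, by omega, hp.2.2⟩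
  · intro u hu
    have := (mem_positiveCompositions.1 hu).2 0
    simp only [Nat.sub_add_cancel this, Fin.cons_self_tail]
  · rintro ⟨l, v⟩ -
    simp
  · intro u hu
    have := (mem_positiveCompositions.1 hu).2 0
    simp only [Nat.sub_add_cancel this, Fin.cons_self_tail]

section gammaN

variable {k A : Type*} [CommRing k] [Ring A] [Algebra k A]

theorem gammaN_eq_sum (n : ℕ) (γ : ℕ → ℕ → Module.End k A) (i : ℕ) :
    gammaN n γ i = ∑ u ∈ positiveCompositions i n, (List.ofFn fun t => γ 1 (u t)).prod :=
  rfl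

theorem gammaN_eq_zero_of_lt (γ : ℕ → ℕ → Module.End k A) {i j : ℕ} (h : j < i) :
    gammaN j γ i = 0 := by
  rw [gammaN_eq_sum, positiveCompositions_eq_empty_of_lt h, sum_empty]

theorem gammaN_one (γ : ℕ → ℕ → Module.End k A) (h0 : γ 1 0 = 0) (j : ℕ) :
    gammaN j γ 1 = γ 1 j := by
  rw [gammaN_eq_sum, positiveCompositions_one]
  split_ifs with hj
  · rw [sum_empty, hj, h0]
  · simp

theorem gammaN_self (γ : ℕ → ℕ → Module.End k A) (i : ℕ) :
    gammaN i γ i = γ 1 1 ^ i := by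
  simp [gammaN_eq_sum, positiveCompositions_self]

theorem gammaN_succ (γ : ℕ → ℕ → Module.End k A) (i j : ℕ) :
    gammaN j γ (i + 1) = ∑ l ∈ range j, γ 1 (l + 1) * gammaN (j - (l + 1)) γ i := by
  simp only [gammaN_eq_sum, sum_positiveCompositions_succ, mul_sum, List.ofFn_succ,
    List.prod_cons, Fin.cons_zero, Fin.cons_succ]

theorem gammaN_congr {γ δ : ℕ → ℕ → Module.End k A} {i j : ℕ}
    (h : ∀ u, u + (i - 1) ≤ j → γ 1 u = δ 1 u) : gammaN j γ i = gammaN j δ i :=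
  sum_congr rfl fun u hu => by
    simp only [h _ (add_le_of_mem_positiveCompositions hu _)]

theorem Fcocycle_congr {γ δ : ℕ → ℕ → Module.End k A} {n : ℕ}
    (h : ∀ u < n, γ 1 u = δ 1 u) : Fcocycle n γ = Fcocycle n δ := by
  ext a b
  refine sum_congr rfl fun i hi => ?_
  rw [mem_Ico] at hi
  rw [h i hi.2, gammaN_congr fun u hu => h u (by omega)]

end gammaN

section familyOfRow

variable {k A : Type*} [CommRing k] [Ring A] [Algebra k A]

noncomputable def familyOfRow (ρ : ℕ → Module.End k A) (r j : ℕ) : Module.End k A :=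
  if r = 0 then (if j = 0 then 1 else 0) else gammaN j (fun _ => ρ) r

variable {ρ : ℕ → Module.End k A}

theorem familyOfRow_of_ne_zero {r : ℕ} (hr : r ≠ 0) (j : ℕ) :
    familyOfRow ρ r j = gammaN j (fun _ => ρ) r :=
  if_neg hr

theorem familyOfRow_one (h0 : ρ 0 = 0) (j : ℕ) : familyOfRow ρ 1 j = ρ j := by
  rw [familyOfRow_of_ne_zero one_ne_zero, gammaN_one _ h0]

theorem familyOfRow_eq_zero_of_lt {r j : ℕ} (h : j < r) : familyOfRow ρ r j = 0 := by
  rw [familyOfRow_of_ne_zero (by omega), gammaN_eq_zero_of_lt _ h]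

theorem familyOfRow_congr {σ : ℕ → Module.End k A} {j : ℕ} (h : ∀ u ≤ j, ρ u = σ u)
    (r : ℕ) : familyOfRow ρ r j = familyOfRow σ r j := by
  rcases eq_or_ne r 0 with rfl | hr
  · rfl
  rw [familyOfRow_of_ne_zero hr, familyOfRow_of_ne_zero hr]
  exact gammaN_congr fun u hu => h u (by omega)

theorem isTwistingFamily_familyOfRow {N : ℕ} (h0 : ρ 0 = 0)
    (hunit : ∀ j < N, ρ j 1 = if j = 1 then 1 else 0)
    (hprod : ∀ j < N, ∀ a b : A,
      ρ j (a * b) = ∑ i ∈ range N, ρ i a * familyOfRow ρ i j b) :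
    IsTwistingFamily k A N (familyOfRow ρ) := by
  simp only [IsTwistingFamily, familyOfRow_one h0]
  refine ⟨fun r j hr hj => familyOfRow_eq_zero_of_lt (by omega),
    fun j _ => if_pos rfl, hunit, hprod, fun r j hr _ => ?_⟩
  obtain ⟨m, rfl⟩ : ∃ m, r = m + 1 := ⟨r - 1, by omega⟩
  rw [familyOfRow_of_ne_zero (by omega), gammaN_succ, sum_range_succ', h0, zero_mul, add_zero,
    Nat.add_sub_cancel]
  refine sum_congr rfl fun l hl => ?_
  rw [familyOfRow_of_ne_zero (by omega)]

theorem IsTwistingFamily.eq_familyOfRow {n : ℕ} {γ : ℕ → ℕ → Module.End k A}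
    (hγ : IsTwistingFamily k A n γ) (h0 : γ 1 0 = 0) :
    ∀ j < n, ∀ r, γ r j = familyOfRow (γ 1) r j := by
  obtain ⟨-, hzero, -, -, hcomp⟩ := hγ
  intro j hj r
  induction r generalizing j with
  | zero => exact hzero j hj
  | succ m ih =>
    rw [familyOfRow_of_ne_zero (by omega)]
    rcases Nat.eq_zero_or_pos m with rfl | hm
    · exact (gammaN_one γ h0 j).symm
    rw [hcomp (m + 1) j (by omega) hj, gammaN_succ, sum_range_succ', h0, zero_mul,
      add_zero, Nat.add_sub_cancel]
    refine sum_congr rfl fun l hl => ?_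
    rw [mem_range] at hl
    rw [ih _ (by omega), familyOfRow_of_ne_zero (by omega)]

theorem sum_mul_familyOfRow_top {n : ℕ} (hn : 2 ≤ n) (h0 : ρ 0 = 0) (a b : A) :
    ∑ i ∈ range (n + 1), ρ i a * familyOfRow ρ i n b =
      ρ 1 a * ρ n b + ρ n a * (ρ 1 ^ n) b + Fcocycle n (fun _ => ρ) a b := by
  rw [sum_range_succ, range_eq_Ico, sum_eq_sum_Ico_succ_bot (by omega),
    sum_eq_sum_Ico_succ_bot (by omega), h0, familyOfRow_one h0,
    familyOfRow_of_ne_zero (by omega : n ≠ 0), gammaN_self, Fcocycle,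
    sum_congr rfl fun i hi => by rw [familyOfRow_of_ne_zero (by simp at hi; omega)]]
  simp only [LinearMap.zero_apply, zero_mul, zero_add]
  abel

end familyOfRow

section extension

variable {k A : Type*} [CommRing k] [Ring A] [Algebra k A] {n : ℕ}
  {γ : ℕ → ℕ → Module.End k A}

theorem IsTwistingFamily.apply_mul_top (hγ : IsTwistingFamily k A (n + 1) γ) (hn : 2 ≤ n)
    (h0 : γ 1 0 = 0) (a b : A) :
    γ 1 n (a * b) = γ 1 1 a * γ 1 n b + γ 1 n a * (γ 1 1 ^ n) b + Fcocycle n γ a b := by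
  have hcol := hγ.eq_familyOfRow h0 n n.lt_succ_self
  obtain ⟨-, -, -, hprod, -⟩ := hγ
  rw [hprod n n.lt_succ_self a b, sum_congr rfl fun i _ => by rw [hcol i]]
  exact sum_mul_familyOfRow_top hn h0 a b

theorem IsTwistingFamily.exists_extension (hγ : IsTwistingFamily k A n γ) (hn : 2 ≤ n)
    (h0 : γ 1 0 = 0) {g : Module.End k A} (hg1 : g 1 = 0)
    (hg : ∀ a b, g (a * b) = γ 1 1 a * g b + g a * (γ 1 1 ^ n) b + Fcocycle n γ a b) :
    ∃ γ' : ℕ → ℕ → Module.End k A,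
      IsTwistingFamily k A (n + 1) γ' ∧ γ' 1 0 = 0 ∧ ∀ j < n, γ' 1 j = γ 1 j := by
  have hcol := hγ.eq_familyOfRow h0
  obtain ⟨-, -, hunit, hprod, -⟩ := hγ
  let ρ : ℕ → Module.End k A := fun j => if j < n then γ 1 j else if j = n then g else 0
  have hρ : ∀ j < n, ρ j = γ 1 j := fun j hj => if_pos hj
  have hρn : ρ n = g := by simp [ρ]
  have hρ0 : ρ 0 = 0 := (hρ 0 (by omega)).trans h0
  refine ⟨familyOfRow ρ, isTwistingFamily_familyOfRow hρ0 (fun j hj => ?_) (fun j hj a b => ?_),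
    (familyOfRow_one hρ0 0).trans hρ0, fun j hj => (familyOfRow_one hρ0 j).trans (hρ j hj)⟩
  · rcases Nat.lt_succ_iff_lt_or_eq.1 hj with hj | rfl
    · rw [hρ j hj]
      exact hunit j hj
    · rw [hρn, hg1, if_neg (by omega)]
  · rcases Nat.lt_succ_iff_lt_or_eq.1 hj with hj | rfl
    · rw [sum_range_succ, familyOfRow_eq_zero_of_lt hj, LinearMap.zero_apply, mul_zero,
        add_zero, hρ j hj, hprod j hj a b]
      refine sum_congr rfl fun i hi => ?_
      rw [mem_range] at hi
      rw [hρ i hi, hcol j hj, familyOfRow_congr fun u hu => (hρ u (by omega)).symm]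
    · rw [sum_mul_familyOfRow_top hn hρ0, hρn, hg, hρ 1 (by omega),
        Fcocycle_congr (γ := fun _ => ρ) hρ]

end extension

/-- For an upper triangular twisting map `s_n` (`γ^1_0 = 0`, `α := γ^1_1`), there
exists an upper triangular twisting map `s_{n+1}` with the same `γ^1_j` for
`j = 0,…,n-1` if and only if there is a `k`-linear map `γ^1_n : A → A` with
`γ^1_n(1) = 0` satisfying
`γ^1_n(ab) = α(a)γ^1_n(b) + γ^1_n(a)α^n(b) + F(a ⊗ b)`, i.e. iff `[F] = 0` in
`H²(A, _α A_{α^n})`. -/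
theorem statement18 {k A : Type*} [CommRing k] [Ring A] [Algebra k A] (n : ℕ)
    (hn : 2 ≤ n) (γ : ℕ → ℕ → Module.End k A)
    (hγ : IsTwistingFamily k A n γ)
    (h0 : γ 1 0 = 0) :
    (∃ γ' : ℕ → ℕ → Module.End k A,
        IsTwistingFamily k A (n + 1) γ' ∧ γ' 1 0 = 0 ∧
        ∀ j < n, γ' 1 j = γ 1 j) ↔
      (∃ γ1n : Module.End k A, γ1n 1 = 0 ∧
        ∀ a b : A,
          γ1n (a * b) =
            γ 1 1 a * γ1n b + γ1n a * ((γ 1 1) ^ n) b + Fcocycle n γ a b) := by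
  constructor
  · rintro ⟨γ', hγ', h0', hagree⟩
    refine ⟨γ' 1 n, by simpa [show n ≠ 1 by omega] using hγ'.2.2.1 n n.lt_succ_self,
      fun a b => ?_⟩
    rw [hγ'.apply_mul_top hn h0' a b, hagree 1 (by omega), Fcocycle_congr hagree]
  · rintro ⟨g, hg1, hg⟩
    exact hγ.exists_extension hn h0 hg1 hg
end
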